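/- arXiv:2501.03994 — 7 statements merged into one kernel-verified Lean document; each statement's English description precedes it below -/
import Mathlib

section
/- Consider the first-order IMEX (backward/forward) Euler upwind scheme for the linear multi-scale advection equation on a periodic grid: for every index j, w^{n+1}_j + μ (w^{n+1}_j - w^{n+1}_{j-1}) = w^n_j - λ (w^n_j - w^n_{j-1}). If 0 ≤ λ ≤ 1 and μ ≥ 0 (in particular, with no upper bound on μ, i.e. no CFL restriction from the implicit fast wave), then the scheme is L∞ stable and total variation diminishing: ‖w^{n+1}‖∞ ≤ ‖w^n‖∞ and TV(w^{n+1}) ≤ TV(w^n). -/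
/-- L∞ stability and TVD property of the first-order IMEX (backward/forward) Euler
upwind scheme for the linear multi-scale advection equation on a periodic grid,
with `0 ≤ λ ≤ 1` and no upper bound on the implicit Courant number `μ ≥ 0`. -/
theorem imex1_Linf_stable_and_TVD {N : ℕ} [NeZero N] (lam mu : ℝ)
    (hlam0 : 0 ≤ lam) (hlam1 : lam ≤ 1) (hmu : 0 ≤ mu)
    (w wnext : ZMod N → ℝ)
    (hscheme : ∀ j : ZMod N,
      wnext j + mu * (wnext j - wnext (j - 1)) = w j - lam * (w j - w (j - 1))) :
    Finset.univ.sup' Finset.univ_nonempty (fun j : ZMod N => |wnext j|) ≤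
      Finset.univ.sup' Finset.univ_nonempty (fun j : ZMod N => |w j|) ∧
    (∑ j : ZMod N, |wnext (j + 1) - wnext j|) ≤ ∑ j : ZMod N, |w (j + 1) - w j| := by
  set M := Finset.univ.sup' Finset.univ_nonempty (fun j : ZMod N => |w j|) with hM
  set M' := Finset.univ.sup' Finset.univ_nonempty (fun j : ZMod N => |wnext j|) with hM'
  have hwle : ∀ k : ZMod N, |w k| ≤ M := fun k =>
    Finset.le_sup' (fun j : ZMod N => |w j|) (Finset.mem_univ k)
  have hwnle : ∀ k : ZMod N, |wnext k| ≤ M' := fun k =>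
    Finset.le_sup' (fun j : ZMod N => |wnext j|) (Finset.mem_univ k)
  constructor
  · obtain ⟨j, -, hj⟩ :=
      Finset.exists_mem_eq_sup' (Finset.univ_nonempty (α := ZMod N))
        (fun j : ZMod N => |wnext j|)
    have hsch := hscheme j
    have hid : (1 + mu) * wnext j
        = mu * wnext (j - 1) + (1 - lam) * w j + lam * w (j - 1) := by linarith
    have habs : (1 + mu) * |wnext j|
        ≤ mu * |wnext (j - 1)| + (1 - lam) * |w j| + lam * |w (j - 1)| := by
      calc (1 + mu) * |wnext j| = |(1 + mu) * wnext j| := by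
            rw [abs_mul, abs_of_nonneg (show (0:ℝ) ≤ 1 + mu by linarith)]
        _ = |mu * wnext (j - 1) + (1 - lam) * w j + lam * w (j - 1)| := by rw [hid]
        _ ≤ |mu * wnext (j - 1)| + |(1 - lam) * w j| + |lam * w (j - 1)| := by
            exact (abs_add_le _ _).trans (by gcongr; exact abs_add_le _ _)
        _ = mu * |wnext (j - 1)| + (1 - lam) * |w j| + lam * |w (j - 1)| := by
            rw [abs_mul, abs_mul, abs_mul, abs_of_nonneg hmu,
              abs_of_nonneg (show (0:ℝ) ≤ 1 - lam by linarith), abs_of_nonneg hlam0]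
    have h1 := hwnle (j - 1)
    have h2 := hwle j
    have h3 := hwle (j - 1)
    have hMj : M' = |wnext j| := hj
    nlinarith [abs_nonneg (wnext j)]
  · set d : ZMod N → ℝ := fun j => wnext (j + 1) - wnext j with hd
    set e : ZMod N → ℝ := fun j => w (j + 1) - w j with he
    have key : ∀ j : ZMod N,
        (1 + mu) * |d j| ≤ mu * |d (j - 1)| + (1 - lam) * |e j| + lam * |e (j - 1)| := by
      intro j
      have h1 := hscheme (j + 1)
      have h2 := hscheme j
      have e1 : j + 1 - 1 = j := by ring
      have e2 : j - 1 + 1 = j := by ring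
      rw [e1] at h1
      have hid : (1 + mu) * d j = mu * d (j - 1) + (1 - lam) * e j + lam * e (j - 1) := by
        simp only [hd, he, e2]
        linarith
      calc (1 + mu) * |d j| = |(1 + mu) * d j| := by
            rw [abs_mul, abs_of_nonneg (show (0:ℝ) ≤ 1 + mu by linarith)]
        _ = |mu * d (j - 1) + (1 - lam) * e j + lam * e (j - 1)| := by rw [hid]
        _ ≤ |mu * d (j - 1)| + |(1 - lam) * e j| + |lam * e (j - 1)| := by
            exact (abs_add_le _ _).trans (by gcongr; exact abs_add_le _ _)
        _ = mu * |d (j - 1)| + (1 - lam) * |e j| + lam * |e (j - 1)| := by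
            rw [abs_mul, abs_mul, abs_mul, abs_of_nonneg hmu,
              abs_of_nonneg (show (0:ℝ) ≤ 1 - lam by linarith), abs_of_nonneg hlam0]
    have hsum : ∑ j : ZMod N, (1 + mu) * |d j|
        ≤ ∑ j : ZMod N, (mu * |d (j - 1)| + (1 - lam) * |e j| + lam * |e (j - 1)|) :=
      Finset.sum_le_sum fun j _ => key j
    have hreD : ∑ j : ZMod N, |d (j - 1)| = ∑ j : ZMod N, |d j| :=
      Fintype.sum_equiv (Equiv.subRight (1 : ZMod N)) _ _ (fun j => rfl)
    have hreE : ∑ j : ZMod N, |e (j - 1)| = ∑ j : ZMod N, |e j| :=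
      Fintype.sum_equiv (Equiv.subRight (1 : ZMod N)) _ _ (fun j => rfl)
    have expand : ∑ j : ZMod N, (mu * |d (j - 1)| + (1 - lam) * |e j| + lam * |e (j - 1)|)
        = mu * ∑ j : ZMod N, |d j| + (1 - lam) * ∑ j : ZMod N, |e j|
          + lam * ∑ j : ZMod N, |e j| := by
      rw [Finset.sum_add_distrib, Finset.sum_add_distrib, ← Finset.mul_sum, ← Finset.mul_sum,
        ← Finset.mul_sum, hreD, hreE]
    rw [expand, ← Finset.mul_sum] at hsum
    have := hsum
    nlinarith [Finset.sum_nonneg (fun j (_ : j ∈ (Finset.univ : Finset (ZMod N))) => abs_nonneg (d j))]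
end

section
/- (Second-stage L∞ estimate.) Let a > 0, μ ≥ 0 and λ ≥ 0 with 1 - λ a ≥ 0. Suppose the periodic grid functions w and v satisfy, for every index j, (1 + μ a) v_j - μ a v_{j-1} = (1 - λ a) w_j + λ a w_{j-1}. Then ‖v‖∞ ≤ ‖w‖∞. -/
/-- Second-stage L∞ estimate: if `(1 + μa) v_j - μa v_{j-1} = (1 - λa) w_j + λa w_{j-1}`
for every j, with `a > 0`, `μ ≥ 0`, `λ ≥ 0` and `1 - λa ≥ 0`, then `‖v‖∞ ≤ ‖w‖∞`. -/
theorem secondStage_Linf_estimate {N : ℕ} [NeZero N] (a mu lam : ℝ)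
    (ha : 0 < a) (hmu : 0 ≤ mu) (hlam : 0 ≤ lam) (hla : 0 ≤ 1 - lam * a)
    (w v : ZMod N → ℝ)
    (h : ∀ j : ZMod N,
      (1 + mu * a) * v j - mu * a * v (j - 1) = (1 - lam * a) * w j + lam * a * w (j - 1)) :
    Finset.univ.sup' Finset.univ_nonempty (fun j : ZMod N => |v j|) ≤
      Finset.univ.sup' Finset.univ_nonempty (fun j : ZMod N => |w j|) := by
  set M := Finset.univ.sup' Finset.univ_nonempty (fun j : ZMod N => |v j|) with hM
  set W := Finset.univ.sup' Finset.univ_nonempty (fun j : ZMod N => |w j|) with hW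
  obtain ⟨j, -, hj⟩ := Finset.exists_mem_eq_sup' (Finset.univ_nonempty)
    (fun j : ZMod N => |v j|)
  have hvM : ∀ k, |v k| ≤ M := fun k => Finset.le_sup' (fun j : ZMod N => |v j|) (Finset.mem_univ k)
  have hwW : ∀ k, |w k| ≤ W := fun k => Finset.le_sup' (fun j : ZMod N => |w j|) (Finset.mem_univ k)
  have hmua : 0 ≤ mu * a := mul_nonneg hmu ha.le
  have hlaa : 0 ≤ lam * a := mul_nonneg hlam ha.le
  have key : (1 + mu * a) * M ≤ mu * a * M + W := by
    calc (1 + mu * a) * M = |(1 + mu * a) * v j| := by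
          rw [abs_mul, abs_of_nonneg (by linarith : (0:ℝ) ≤ 1 + mu * a), ← hj]
      _ = |mu * a * v (j-1) + ((1 - lam * a) * w j + lam * a * w (j-1))| := by
          rw [← h j]; ring_nf
      _ ≤ |mu * a * v (j-1)| + (|(1 - lam * a) * w j| + |lam * a * w (j-1)|) := by
          exact (abs_add_le _ _).trans (by gcongr; exact abs_add_le _ _)
      _ ≤ mu * a * M + ((1 - lam * a) * W + lam * a * W) := by
          have h1 : |mu * a * v (j-1)| ≤ mu * a * M := by
            rw [abs_mul, abs_of_nonneg hmua]; exact mul_le_mul_of_nonneg_left (hvM _) hmua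
          have h2 : |(1 - lam * a) * w j| ≤ (1 - lam * a) * W := by
            rw [abs_mul, abs_of_nonneg hla]; exact mul_le_mul_of_nonneg_left (hwW _) hla
          have h3 : |lam * a * w (j-1)| ≤ lam * a * W := by
            rw [abs_mul, abs_of_nonneg hlaa]; exact mul_le_mul_of_nonneg_left (hwW _) hlaa
          linarith
      _ = mu * a * M + W := by ring
  linarith
end

section
/- (Second-stage TV estimate.) Let a > 0, μ ≥ 0 and λ ≥ 0 with 1 - λ a ≥ 0. Suppose the periodic grid functions w and v satisfy, for every index j, (1 + μ a) v_j - μ a v_{j-1} = (1 - λ a) w_j + λ a w_{j-1}. Then TV(v) ≤ TV(w). -/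
/-- Second-stage TV estimate: if `(1 + μa) v_j - μa v_{j-1} = (1 - λa) w_j + λa w_{j-1}`
for every j, with `a > 0`, `μ ≥ 0`, `λ ≥ 0` and `1 - λa ≥ 0`, then `TV(v) ≤ TV(w)`. -/
theorem secondStage_TV_estimate {N : ℕ} [NeZero N] (a mu lam : ℝ)
    (ha : 0 < a) (hmu : 0 ≤ mu) (hlam : 0 ≤ lam) (hla : 0 ≤ 1 - lam * a)
    (w v : ZMod N → ℝ)
    (h : ∀ j : ZMod N,
      (1 + mu * a) * v j - mu * a * v (j - 1) = (1 - lam * a) * w j + lam * a * w (j - 1)) :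
    (∑ j : ZMod N, |v (j + 1) - v j|) ≤ ∑ j : ZMod N, |w (j + 1) - w j| := by
  set S := ∑ j : ZMod N, |v (j + 1) - v j| with hS
  set T := ∑ j : ZMod N, |w (j + 1) - w j| with hT
  have hma : (0:ℝ) ≤ mu * a := mul_nonneg hmu ha.le
  have hlama : (0:ℝ) ≤ lam * a := mul_nonneg hlam ha.le
  have h1ma : (0:ℝ) ≤ 1 + mu * a := by linarith
  have hSback : ∑ j : ZMod N, |v j - v (j - 1)| = S := by
    rw [hS]
    exact (Fintype.sum_equiv (Equiv.addRight (1 : ZMod N)) _ _ (by intro x; simp)).symm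
  have hTback : ∑ j : ZMod N, |w j - w (j - 1)| = T := by
    rw [hT]
    exact (Fintype.sum_equiv (Equiv.addRight (1 : ZMod N)) _ _ (by intro x; simp)).symm
  have key : ∀ j : ZMod N, (1 + mu * a) * |v (j + 1) - v j| ≤
      mu * a * |v j - v (j - 1)| + (1 - lam * a) * |w (j + 1) - w j|
        + lam * a * |w j - w (j - 1)| := by
    intro j
    have h1 := h (j + 1)
    have h2 := h j
    rw [add_sub_cancel_right] at h1
    have heq : (1 + mu * a) * (v (j + 1) - v j) =
        mu * a * (v j - v (j - 1)) + (1 - lam * a) * (w (j + 1) - w j)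
          + lam * a * (w j - w (j - 1)) := by linarith
    calc (1 + mu * a) * |v (j + 1) - v j|
        = |(1 + mu * a) * (v (j + 1) - v j)| := by
          rw [abs_mul, abs_of_nonneg h1ma]
      _ = |mu * a * (v j - v (j - 1)) + (1 - lam * a) * (w (j + 1) - w j)
            + lam * a * (w j - w (j - 1))| := by rw [heq]
      _ ≤ |mu * a * (v j - v (j - 1))| + |(1 - lam * a) * (w (j + 1) - w j)|
            + |lam * a * (w j - w (j - 1))| := by
          exact (abs_add_le _ _).trans (by gcongr; exact abs_add_le _ _)
      _ = mu * a * |v j - v (j - 1)| + (1 - lam * a) * |w (j + 1) - w j|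
            + lam * a * |w j - w (j - 1)| := by
          simp only [abs_mul, abs_of_nonneg hmu, abs_of_nonneg ha.le,
            abs_of_nonneg hlam, abs_of_nonneg hla]
  have hsum : (1 + mu * a) * S ≤ mu * a * S + (1 - lam * a) * T + lam * a * T := by
    have := Finset.sum_le_sum (fun j (_ : j ∈ Finset.univ) => key j)
    rw [← Finset.mul_sum] at this
    simp only [Finset.sum_add_distrib, ← Finset.mul_sum] at this
    rw [hSback, hTback] at this
    exact this
  nlinarith [hsum]
end

section
/- (Third-stage L∞ estimate.) Let γ > 1/3, 0 ≤ θ₃ ≤ (3γ-1)/(6γ²), μ ≥ 0, and λ ≥ 0 satisfy λ ≤ 6γ/(3γ-1), λ ≤ 6γ/(3γ²+1), and 1 - λ(1-θ₃)c₃ - θ₃ λ(ã₃₁ - a₃₂) - θ₃ a₃₂/a₂₂ ≥ 0, where the γ-family coefficients are used. Suppose the periodic grid functions wⁿ, w⁽²⁾ and w⁽³⁾ satisfy, for every index j: (i) w⁽²⁾_j + a₂₂ μ Δ_j w⁽²⁾ = wⁿ_j - λ ã₂₁ Δ_j wⁿ, and (ii) w⁽³⁾_j + (1-θ₃) c₃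 μ Δ_j w⁽³⁾ = wⁿ_j - λ[(1-θ₃) c₃ Δ_j wⁿ + θ₃ (ã₃₁ Δ_j wⁿ + ã₃₂ Δ_j w⁽²⁾)] - μ θ₃ (a₃₂ Δ_j w⁽²⁾ + a₃₃ Δ_j w⁽³⁾). Then ‖w⁽³⁾‖∞ ≤ ‖wⁿ‖∞. -/
lemma maxpr_aux {N : ℕ} [NeZero N] (A M : ℝ) (hA : 0 ≤ A) (v : ZMod N → ℝ)
    (h : ∀ j, |v j + A * (v j - v (j-1))| ≤ M) :
    Finset.univ.sup' Finset.univ_nonempty (fun j : ZMod N => |v j|) ≤ M := by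
  obtain ⟨j, -, hj⟩ := Finset.exists_mem_eq_sup' Finset.univ_nonempty
    (fun j : ZMod N => |v j|)
  rw [hj]
  have hmax : |v (j-1)| ≤ |v j| := by
    have := Finset.le_sup' (fun j : ZMod N => |v j|) (Finset.mem_univ (j-1))
    rw [hj] at this; exact this
  have h1 := h j
  have h2 : |v j| ≤ |v j + A * (v j - v (j-1))| := by
    have key := abs_sub_abs_le_abs_sub ((1+A) * v j) (A * v (j-1))
    have e1 : (1+A) * v j - A * v (j-1) = v j + A * (v j - v (j-1)) := by ring
    rw [e1, abs_mul, abs_mul, abs_of_nonneg (by linarith : (0:ℝ) ≤ 1+A),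
      abs_of_nonneg hA] at key
    nlinarith [abs_nonneg (v j)]
  linarith

set_option maxHeartbeats 1000000 in
/-- Third-stage L∞ estimate for the convex-combination TVD3 scheme based on the
γ-family of third-order IMEX Butcher tableaux. -/
theorem thirdStage_Linf_estimate {N : ℕ} [NeZero N] (γ θ₃ mu lam : ℝ)
    (hγ : 1/3 < γ) (hθ₃0 : 0 ≤ θ₃) (hθ₃ : θ₃ ≤ (3 * γ - 1) / (6 * γ ^ 2))
    (hmu : 0 ≤ mu) (hlam0 : 0 ≤ lam)
    (hlam1 : lam ≤ 6 * γ / (3 * γ - 1)) (hlam2 : lam ≤ 6 * γ / (3 * γ ^ 2 + 1))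
    (hlam3 : 1 - lam * (1 - θ₃) * ((γ + 1) / 2)
        - θ₃ * lam * (-(6 * γ ^ 3 - 3 * γ ^ 2 + 1) / (2 * (3 * γ - 1)) - γ)
        - θ₃ * γ / ((3 * γ - 1) / (6 * γ)) ≥ 0)
    (wn w2 w3 : ZMod N → ℝ)
    (h2 : ∀ j : ZMod N,
      w2 j + ((3 * γ - 1) / (6 * γ)) * mu * (w2 j - w2 (j - 1)) =
        wn j - lam * ((3 * γ - 1) / (6 * γ)) * (wn j - wn (j - 1)))
    (h3 : ∀ j : ZMod N,
      w3 j + (1 - θ₃) * ((γ + 1) / 2) * mu * (w3 j - w3 (j - 1)) =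
        wn j
        - lam * ((1 - θ₃) * ((γ + 1) / 2) * (wn j - wn (j - 1))
            + θ₃ * ((-(6 * γ ^ 3 - 3 * γ ^ 2 + 1) / (2 * (3 * γ - 1))) * (wn j - wn (j - 1))
              + (γ * (3 * γ ^ 2 + 1) / (3 * γ - 1)) * (w2 j - w2 (j - 1))))
        - mu * θ₃ * (γ * (w2 j - w2 (j - 1)) + ((1 - γ) / 2) * (w3 j - w3 (j - 1)))) :
    Finset.univ.sup' Finset.univ_nonempty (fun j : ZMod N => |w3 j|) ≤
      Finset.univ.sup' Finset.univ_nonempty (fun j : ZMod N => |wn j|) := by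
  have hγ0 : (0:ℝ) < γ := by linarith
  have h3γ : (0:ℝ) < 3*γ - 1 := by linarith
  have hγne : γ ≠ 0 := ne_of_gt hγ0
  have h3γne : (3*γ - 1) ≠ 0 := ne_of_gt h3γ
  set M := Finset.univ.sup' Finset.univ_nonempty (fun j : ZMod N => |wn j|) with hMdef
  have hM : ∀ k : ZMod N, |wn k| ≤ M := fun k =>
    Finset.le_sup' (fun j : ZMod N => |wn j|) (Finset.mem_univ k)
  have hM0 : 0 ≤ M := le_trans (abs_nonneg _) (hM 0)
  have hs1 : lam * (3*γ - 1) ≤ 6*γ := (le_div_iff₀ h3γ).mp hlam1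
  have hl2 : lam * (3*γ^2+1) ≤ 6*γ := (le_div_iff₀ (by positivity)).mp hlam2
  have hθγ : θ₃ * (6*γ^2) ≤ 3*γ - 1 := (le_div_iff₀ (by positivity)).mp hθ₃
  -- Step A : ‖w2‖ ≤ M
  have hA2 : 0 ≤ ((3 * γ - 1) / (6 * γ)) * mu := by positivity
  have sup2 : Finset.univ.sup' Finset.univ_nonempty (fun j : ZMod N => |w2 j|) ≤ M := by
    apply maxpr_aux _ _ hA2
    intro j
    rw [h2 j]
    have ha := abs_le.mp (hM j)
    have hb := abs_le.mp (hM (j-1))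
    rw [abs_le]
    have hs : 0 ≤ lam * ((3*γ-1)/(6*γ)) := by positivity
    have hs' : lam * ((3*γ-1)/(6*γ)) ≤ 1 := by
      rw [mul_div_assoc', div_le_one (by linarith : (0:ℝ) < 6*γ)]; linarith
    constructor <;>
      nlinarith [mul_nonneg hs (by linarith : 0 ≤ wn j + M),
        mul_nonneg hs (by linarith : 0 ≤ M - wn j),
        mul_nonneg hs (by linarith : 0 ≤ wn (j-1) + M),
        mul_nonneg hs (by linarith : 0 ≤ M - wn (j-1))]
  have hw2 : ∀ k : ZMod N, |w2 k| ≤ M := fun k =>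
    le_trans (Finset.le_sup' (fun j : ZMod N => |w2 j|) (Finset.mem_univ k)) sup2
  -- cleared-denominator forms of the stage equations
  have H2 : ∀ j : ZMod N, 6*γ*(w2 j) + (3*γ-1)*mu*(w2 j - w2 (j-1)) =
      6*γ*(wn j) - lam*(3*γ-1)*(wn j - wn (j-1)) := by
    intro j
    linear_combination (norm := (field_simp; ring)) (6*γ) * h2 j
  have H3 : ∀ j : ZMod N, 2*(3*γ-1)*(w3 j) + (3*γ-1)*(1-θ₃)*(γ+1)*mu*(w3 j - w3 (j-1)) =
      2*(3*γ-1)*(wn j)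
      - lam*((3*γ-1)*(1-θ₃)*(γ+1)*(wn j - wn (j-1))
          + θ₃*(-(6*γ^3-3*γ^2+1)*(wn j - wn (j-1)) + 2*γ*(3*γ^2+1)*(w2 j - w2 (j-1))))
      - mu*θ₃*(2*(3*γ-1)*γ*(w2 j - w2 (j-1)) + (3*γ-1)*(1-γ)*(w3 j - w3 (j-1))) := by
    intro j
    linear_combination (norm := (field_simp; ring)) (2*(3*γ-1)) * h3 j
  -- convex-combination coefficients (multiplied by D = 2(3γ-1))
  set κ₁ : ℝ := lam*(γ+1)*((3*γ-1) - 6*γ^2*θ₃) with hκ₁def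
  set κ₃ : ℝ := 2*lam*θ₃*γ*(3*γ^2+1) with hκ₃def
  set κ₂ : ℝ := 12*γ^2*θ₃ - 2*lam*θ₃*γ*(3*γ^2+1) with hκ₂def
  set κ₀ : ℝ := 2*(3*γ-1) - κ₁ - κ₂ - κ₃ with hκ₀def
  have hκ₁ : 0 ≤ κ₁ := by
    rw [hκ₁def]
    apply mul_nonneg (by positivity)
    nlinarith
  have hκ₃ : 0 ≤ κ₃ := by rw [hκ₃def]; positivity
  have hκ₂ : 0 ≤ κ₂ := by
    have e : κ₂ = 2*θ₃*γ*(6*γ - lam*(3*γ^2+1)) := by rw [hκ₂def]; ring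
    rw [e]
    apply mul_nonneg (by positivity)
    linarith
  have hκ₀ : 0 ≤ κ₀ := by
    have e : κ₀ = 2*(3*γ-1) * (1 - lam * (1 - θ₃) * ((γ + 1) / 2)
        - θ₃ * lam * (-(6 * γ ^ 3 - 3 * γ ^ 2 + 1) / (2 * (3 * γ - 1)) - γ)
        - θ₃ * γ / ((3 * γ - 1) / (6 * γ))) := by
      rw [hκ₀def, hκ₁def, hκ₂def, hκ₃def]
      field_simp
      ring
    rw [e]
    exact mul_nonneg (by linarith) hlam3
  have hsum : κ₀ + κ₁ + κ₂ + κ₃ = 2*(3*γ-1) := by rw [hκ₀def]; ring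
  -- Step B : ‖w3‖ ≤ M
  set A3 : ℝ := ((1-θ₃)*((γ+1)/2) + θ₃*((1-γ)/2))*mu with hA3def
  have hA3 : 0 ≤ A3 := by
    rw [hA3def]
    apply mul_nonneg _ hmu
    nlinarith
  apply maxpr_aux A3 M hA3
  intro j
  have E : 2*(3*γ-1) * (w3 j + A3 * (w3 j - w3 (j-1))) =
      κ₀ * wn j + κ₁ * wn (j-1) + κ₂ * w2 j + κ₃ * w2 (j-1) := by
    rw [hA3def, hκ₀def, hκ₁def, hκ₂def, hκ₃def]
    linear_combination H3 j - 2*γ*θ₃ * H2 j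
  have ha := abs_le.mp (hM j)
  have hb := abs_le.mp (hM (j-1))
  have hc := abs_le.mp (hw2 j)
  have hd := abs_le.mp (hw2 (j-1))
  rw [abs_le]
  constructor
  · nlinarith [mul_nonneg hκ₀ (by linarith : 0 ≤ wn j + M),
      mul_nonneg hκ₁ (by linarith : 0 ≤ wn (j-1) + M),
      mul_nonneg hκ₂ (by linarith : 0 ≤ w2 j + M),
      mul_nonneg hκ₃ (by linarith : 0 ≤ w2 (j-1) + M)]
  · nlinarith [mul_nonneg hκ₀ (by linarith : 0 ≤ M - wn j),
      mul_nonneg hκ₁ (by linarith : 0 ≤ M - wn (j-1)),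
      mul_nonneg hκ₂ (by linarith : 0 ≤ M - w2 j),
      mul_nonneg hκ₃ (by linarith : 0 ≤ M - w2 (j-1))]
end

section
/- (Lemma 3.1: L∞ stability and TVD property of the TVD3 scheme.) Let γ ≥ √3/3, θ₃ = (3γ-1)/(6γ²), 0 ≤ θ₄ < (3γ-1)(3γ²+1)/(18γ³), μ ≥ 0, and 0 ≤ λ ≤ (18γ³θ₄ - (3γ-1)(3γ²+1)) / ((3γ-1)((6γ²+1)θ₄ - (3γ²+1))). Suppose the periodic grid functions wⁿ, w⁽²⁾, w⁽³⁾ and w^{n+1} satisfy, for every index j: (i) w⁽²⁾_j + a₂₂ μ Δ_j w⁽²⁾ = wⁿ_j - λ ã₂₁ Δ_j wⁿ; (ii) w⁽³⁾_j + (1-θ₃) c₃ μ Δ_j w⁽³⁾ = wⁿ_j - λ[(1-θ₃) c₃ Δ_j wⁿ + θ₃ (ã₃₁ Δ_j wⁿ + ã₃₂ Δ_j w⁽²⁾)] - μ θ₃ (a₃₂ Δ_j w⁽²⁾ + a₃₃ Δ_j w⁽³⁾); (iii) w^{n+1}_j + (1-θ₄) μ Δ_j w^{n+1} = wⁿ_j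 - θ₄ (λ + μ)(b₂ Δ_j w⁽²⁾ + b₃ Δ_j w⁽³⁾) - (1-θ₄) λ Δ_j wⁿ, where the γ-family coefficients are used. Then the scheme is L∞ stable and total variation diminishing: ‖w^{n+1}‖∞ ≤ ‖wⁿ‖∞ and TV(w^{n+1}) ≤ TV(wⁿ). -/
/-!
Every stage of the scheme has the form `v + b (v - S v) = g` with `b ≥ 0`, `S` the backward
shift, and for a seminorm `p` with `p ∘ S ≤ p` this forces `p v ≤ p g`. With the given θ₃, stage 3
is an IMEX Euler step `w₃ = R ((1 - x) + x S) w₂` with `R = (1 + b - b S)⁻¹`, and the final stage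
applies an implicit step to a combination of `wn, S wn, w₂, S w₂` and `((1 - x) + x S) w₃`.
All explicit parts are convex combinations of shifts except that `x` may exceed `1`; this is
absorbed through `((1 - x) + x S)² R = α + β S + κ S² R` with `α, κ ≥ 0`, `α + β + κ = 1`: the
negative part of `β` is dominated by the weight of `S w₂`, which is where the bounds on θ₄ and λ
enter. The sup norm and the total variation are both shift-invariant seminorms.
-/

open Finset

section Contraction

variable {E : Type*} [AddCommGroup E] [Module ℝ E] (p : Seminorm ℝ E) {S : E →ₗ[ℝ] E}

theorem Seminorm.le_of_add_smul_sub_eq (hS : ∀ v, p (S v) ≤ p v) {b : ℝ} (hb : 0 ≤ b)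
    {v g : E} (h : v + b • (v - S v) = g) : p v ≤ p g := by
  have hv : (1 + b) • v = g + b • S v := by rw [← h]; module
  have hseminorm : (1 + b) * p v ≤ p g + b * p v :=
    calc (1 + b) * p v = p ((1 + b) • v) := by
          rw [map_smul_eq_mul, Real.norm_of_nonneg (by linarith)]
      _ ≤ p g + b * p (S v) := by
          rw [hv]
          refine (map_add_le_add p _ _).trans_eq ?_
          rw [map_smul_eq_mul, Real.norm_of_nonneg hb]
      _ ≤ p g + b * p v := by gcongr; exact hS v
  linarith

theorem Seminorm.apply_smul_add_smul_le (hS : ∀ v, p (S v) ≤ p v) (a c : ℝ) (v : E) :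
    p (a • v + c • S v) ≤ (|a| + |c|) * p v :=
  calc p (a • v + c • S v) ≤ |a| * p v + |c| * p (S v) := by
        simpa only [map_smul_eq_mul, Real.norm_eq_abs] using map_add_le_add p (a • v) (c • S v)
    _ ≤ (|a| + |c|) * p v := by nlinarith [hS v, abs_nonneg c]

/-- `α + β S` is the quotient and `(x² + b β) S²` the remainder of `((1 - x) + x S)²` divided
by `1 + b - b S`. -/
theorem Seminorm.apply_sub_smul_sub_smul_le (hS : ∀ v, p (S v) ≤ p v) {b x α β : ℝ} (hb : 0 ≤ b)
    (hα : (1 + b) * α = (1 - x) ^ 2) (hβ : (1 + b) * β = 2 * x * (1 - x) + b * α) {u w : E}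
    (hw : w + b • (w - S w) = (1 - x) • u + x • S u) :
    p ((1 - x) • w + x • S w - α • u - β • S u) ≤ |x ^ 2 + b * β| * p u := by
  have hSw := congrArg S hw
  simp only [map_add, map_sub, map_smul] at hSw
  refine (p.le_of_add_smul_sub_eq hS hb (g := (x ^ 2 + b * β) • S (S u)) ?_).trans ?_
  · simp only [map_add, map_sub, map_smul]
    linear_combination (norm := skip) (1 - x) • hw + x • hSw
    match_scalars
    · ring
    · ring
    · linear_combination -hα
    · linear_combination -hβ
    · ring
    · ring
  · rw [map_smul_eq_mul, Real.norm_eq_abs]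
    gcongr
    exact (hS _).trans (hS _)

theorem Seminorm.apply_smul_add_smul_add_smul_le (hS : ∀ v, p (S v) ≤ p v) {a c d b x : ℝ}
    (ha : 0 ≤ a) (hc : 0 ≤ c) (hd : 0 ≤ d) (hcd : 0 ≤ c + 2 * d * x * (1 - x)) (hb : 0 ≤ b)
    {u w : E} (hw : w + b • (w - S w) = (1 - x) • u + x • S u) :
    p (a • u + c • S u + d • ((1 - x) • w + x • S w)) ≤ (a + c + d) * p u := by
  have hb1 : 0 < 1 + b := by linarith
  obtain ⟨α, hα⟩ : ∃ α, (1 + b) * α = (1 - x) ^ 2 := ⟨(1 - x) ^ 2 / (1 + b), by field_simp⟩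
  obtain ⟨β, hβ⟩ : ∃ β, (1 + b) * β = 2 * x * (1 - x) + b * α :=
    ⟨(2 * x * (1 - x) + b * α) / (1 + b), by field_simp⟩
  have hα0 : 0 ≤ α := nonneg_of_mul_nonneg_right (hα ▸ sq_nonneg _) hb1
  have hβ0 : 0 ≤ c + d * β := nonneg_of_mul_nonneg_right (a := 1 + b) (by
    linear_combination hcd + mul_nonneg hb hc + mul_nonneg (mul_nonneg hd hb) hα0 - d * hβ) hb1
  have hκ0 : 0 ≤ x ^ 2 + b * β := nonneg_of_mul_nonneg_right (a := (1 + b) ^ 2) (by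
    linear_combination sq_nonneg (b + x) - b ^ 2 * hα - (b * (1 + b)) * hβ) (by positivity)
  have hsum : α + β + (x ^ 2 + b * β) = 1 := mul_left_cancel₀ hb1.ne' (by
    linear_combination (1 + b) * hα + (1 + b) * hβ)
  have hq := p.apply_sub_smul_sub_smul_le hS hb hα hβ hw
  rw [abs_of_nonneg hκ0] at hq
  set q := (1 - x) • w + x • S w - α • u - β • S u
  calc p (a • u + c • S u + d • ((1 - x) • w + x • S w))
      = p ((a + d * α) • u + (c + d * β) • S u + d • q) := by congr 1; module
    _ ≤ |a + d * α| * p u + |c + d * β| * p (S u) + |d| * p q := by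
        simpa only [map_smul_eq_mul, Real.norm_eq_abs] using
          (map_add_le_add p _ (d • q)).trans
            (add_le_add_left (map_add_le_add p ((a + d * α) • u) ((c + d * β) • S u)) _)
    _ ≤ (a + d * α) * p u + (c + d * β) * p u + d * ((x ^ 2 + b * β) * p u) := by
        rw [abs_of_nonneg (by positivity), abs_of_nonneg hβ0, abs_of_nonneg hd]
        gcongr
        exact hS u
    _ = (a + c + d) * p u := by linear_combination (d * p u) * hsum

theorem Seminorm.le_of_tvd3_stages (hS : ∀ v, p (S v) ≤ p v)
    {b₂ b₃ b₄ s x a₀ c₀ a₂ c₂ d : ℝ} (hb₂ : 0 ≤ b₂) (hb₃ : 0 ≤ b₃) (hb₄ : 0 ≤ b₄)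
    (hs₀ : 0 ≤ s) (hs₁ : s ≤ 1) (ha₀ : 0 ≤ a₀) (hc₀ : 0 ≤ c₀) (ha₂ : 0 ≤ a₂) (hc₂ : 0 ≤ c₂)
    (hd : 0 ≤ d) (hc₂d : 0 ≤ c₂ + 2 * d * x * (1 - x)) (hsum : a₀ + c₀ + a₂ + c₂ + d = 1)
    {wn w₂ w₃ wnext : E}
    (h₂ : w₂ + b₂ • (w₂ - S w₂) = (1 - s) • wn + s • S wn)
    (h₃ : w₃ + b₃ • (w₃ - S w₃) = (1 - x) • w₂ + x • S w₂)
    (h₄ : wnext + b₄ • (wnext - S wnext) =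
      a₀ • wn + c₀ • S wn + (a₂ • w₂ + c₂ • S w₂ + d • ((1 - x) • w₃ + x • S w₃))) :
    p wnext ≤ p wn := by
  have hw₂ : p w₂ ≤ p wn := by
    refine (p.le_of_add_smul_sub_eq hS hb₂ h₂).trans ((p.apply_smul_add_smul_le hS _ _ _).trans ?_)
    rw [abs_of_nonneg (by linarith), abs_of_nonneg hs₀, sub_add_cancel, one_mul]
  have hw₃ := p.apply_smul_add_smul_add_smul_le hS ha₂ hc₂ hd hc₂d hb₃ h₃
  calc p wnext ≤ (|a₀| + |c₀|) * p wn + (a₂ + c₂ + d) * p w₂ :=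
        (p.le_of_add_smul_sub_eq hS hb₄ h₄).trans
          ((map_add_le_add p _ _).trans (add_le_add (p.apply_smul_add_smul_le hS _ _ _) hw₃))
    _ ≤ p wn := by
        rw [abs_of_nonneg ha₀, abs_of_nonneg hc₀]
        nlinarith [apply_nonneg p wn, mul_le_mul_of_nonneg_left hw₂ (by linarith : 0 ≤ a₂ + c₂ + d)]

end Contraction

section PeriodicGrid

variable {N : ℕ}

/-- `v - shift v` is the backward difference `Δ v`. -/
def shift : (ZMod N → ℝ) →ₗ[ℝ] ZMod N → ℝ := LinearMap.funLeft ℝ ℝ (· - 1)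

@[simp]
theorem shift_apply (v : ZMod N → ℝ) (j : ZMod N) : shift v j = v (j - 1) := rfl

variable [NeZero N]

def totalVariation : Seminorm ℝ (ZMod N → ℝ) :=
  Seminorm.of (fun v => ∑ j, |v (j + 1) - v j|)
    (fun v w => by
      simp only [Pi.add_apply, ← sum_add_distrib]
      exact sum_le_sum fun j _ => (abs_add_le _ _).trans_eq' (by ring_nf))
    (fun c v => by
      simp only [Pi.smul_apply, smul_eq_mul, ← mul_sub, abs_mul, Real.norm_eq_abs, mul_sum])

theorem totalVariation_apply (v : ZMod N → ℝ) :
    totalVariation v = ∑ j, |v (j + 1) - v j| := rfl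

theorem totalVariation_shift (v : ZMod N → ℝ) : totalVariation (shift v) = totalVariation v := by
  simp only [totalVariation_apply, shift_apply, add_sub_cancel_right]
  exact Fintype.sum_equiv (Equiv.subRight 1) _ _ fun j => by simp

theorem norm_shift_le (v : ZMod N → ℝ) : ‖shift v‖ ≤ ‖v‖ :=
  (pi_norm_le_iff_of_nonneg (norm_nonneg v)).2 fun j => norm_le_pi_norm v (j - 1)

theorem sup'_abs_eq_norm (v : ZMod N → ℝ) : univ.sup' univ_nonempty (fun j => |v j|) = ‖v‖ :=
  le_antisymm (sup'_le _ _ fun j _ => norm_le_pi_norm v j)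
    ((pi_norm_le_iff_of_nonneg ((abs_nonneg (v 0)).trans (le_sup' (fun j => |v j|) (mem_univ 0)))).2
      fun j => le_sup' (fun j => |v j|) (mem_univ j))

end PeriodicGrid

section Coefficients

variable {γ θ₄ lam : ℝ}

theorem one_le_three_mul_sq_of_sqrt_three_div_three_le (hγ : √3 / 3 ≤ γ) : 1 ≤ 3 * γ ^ 2 := by
  have h := pow_le_pow_left₀ (by positivity) hγ 2
  rw [div_pow, Real.sq_sqrt zero_le_three] at h
  linarith

theorem tvd3_theta_mul_lt (hγ : 0 < γ)
    (hθ₄ : θ₄ < (3 * γ - 1) * (3 * γ ^ 2 + 1) / (18 * γ ^ 3)) :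
    (6 * γ ^ 2 + 1) * θ₄ < 3 * γ ^ 2 + 1 := by
  rw [lt_div_iff₀ (by positivity)] at hθ₄
  have h : (6 * γ ^ 2 + 1) * (3 * γ - 1) ≤ 18 * γ ^ 3 := by nlinarith [sq_nonneg (4 * γ - 1)]
  refine lt_of_mul_lt_mul_right (a := 18 * γ ^ 3) ?_ (by positivity)
  calc (6 * γ ^ 2 + 1) * θ₄ * (18 * γ ^ 3)
      < (6 * γ ^ 2 + 1) * ((3 * γ - 1) * (3 * γ ^ 2 + 1)) := by
        rw [mul_assoc]; exact mul_lt_mul_of_pos_left hθ₄ (by positivity)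
    _ ≤ (3 * γ ^ 2 + 1) * (18 * γ ^ 3) := by
        rw [← mul_assoc, mul_comm (3 * γ ^ 2 + 1)]; gcongr

theorem tvd3_lam_mul_le (hP : 0 < 3 * γ - 1)
    (hθ₄ : (6 * γ ^ 2 + 1) * θ₄ < 3 * γ ^ 2 + 1)
    (hlam : lam ≤ (18 * γ ^ 3 * θ₄ - (3 * γ - 1) * (3 * γ ^ 2 + 1)) /
        ((3 * γ - 1) * ((6 * γ ^ 2 + 1) * θ₄ - (3 * γ ^ 2 + 1)))) :
    lam * ((3 * γ - 1) * (3 * γ ^ 2 + 1 - (6 * γ ^ 2 + 1) * θ₄)) ≤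
      (3 * γ - 1) * (3 * γ ^ 2 + 1) - 18 * γ ^ 3 * θ₄ := by
  rw [le_div_iff_of_neg (mul_neg_of_pos_of_neg hP (by linarith))] at hlam
  linarith

theorem tvd3_lam_le_one (hP : 0 < 3 * γ - 1) (hθ₄0 : 0 ≤ θ₄)
    (hθ₄ : (6 * γ ^ 2 + 1) * θ₄ < 3 * γ ^ 2 + 1)
    (hlam : lam * ((3 * γ - 1) * (3 * γ ^ 2 + 1 - (6 * γ ^ 2 + 1) * θ₄)) ≤
      (3 * γ - 1) * (3 * γ ^ 2 + 1) - 18 * γ ^ 3 * θ₄) : lam ≤ 1 := by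
  have hpos : 0 < (3 * γ - 1) * (3 * γ ^ 2 + 1 - (6 * γ ^ 2 + 1) * θ₄) :=
    mul_pos hP (by linarith)
  refine le_of_mul_le_mul_right (hlam.trans ?_) hpos
  nlinarith [mul_nonneg hθ₄0 (sq_nonneg (4 * γ - 1)), sq_nonneg γ]

theorem tvd3_weight_wn_nonneg (hP : 0 < 3 * γ - 1)
    (hlam : lam * ((3 * γ - 1) * (3 * γ ^ 2 + 1 - (6 * γ ^ 2 + 1) * θ₄)) ≤
      (3 * γ - 1) * (3 * γ ^ 2 + 1) - 18 * γ ^ 3 * θ₄) :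
    0 ≤ 1 - 18 * γ ^ 3 * θ₄ / ((3 * γ - 1) * (3 * γ ^ 2 + 1))
      - lam * (3 * γ ^ 2 + 1 - (6 * γ ^ 2 + 1) * θ₄) / (3 * γ ^ 2 + 1) := by
  have hPQ : 0 < (3 * γ - 1) * (3 * γ ^ 2 + 1) := by positivity
  have h : 1 - 18 * γ ^ 3 * θ₄ / ((3 * γ - 1) * (3 * γ ^ 2 + 1))
      - lam * (3 * γ ^ 2 + 1 - (6 * γ ^ 2 + 1) * θ₄) / (3 * γ ^ 2 + 1) =
      ((3 * γ - 1) * (3 * γ ^ 2 + 1) - 18 * γ ^ 3 * θ₄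
        - lam * ((3 * γ - 1) * (3 * γ ^ 2 + 1 - (6 * γ ^ 2 + 1) * θ₄)))
        / ((3 * γ - 1) * (3 * γ ^ 2 + 1)) := by
    generalize 3 * γ - 1 = P at hP ⊢
    field_simp
  rw [h]
  exact div_nonneg (by linarith) hPQ.le

theorem tvd3_weight_w2_nonneg (hγ : 1 ≤ 3 * γ ^ 2) (hP : 0 < 3 * γ - 1) (hθ₄ : 0 ≤ θ₄)
    (hlam : lam ≤ 1) :
    0 ≤ 18 * γ ^ 3 * θ₄ / ((3 * γ - 1) * (3 * γ ^ 2 + 1)) - 6 * γ * θ₄ / (3 * γ ^ 2 + 1) ^ 2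
      - lam * θ₄ * (3 * γ ^ 2 - 1) / (3 * γ ^ 2 + 1) := by
  have hPQ : 0 < (3 * γ - 1) * (3 * γ ^ 2 + 1) ^ 2 := by positivity
  have h : 18 * γ ^ 3 * θ₄ / ((3 * γ - 1) * (3 * γ ^ 2 + 1)) - 6 * γ * θ₄ / (3 * γ ^ 2 + 1) ^ 2
      - lam * θ₄ * (3 * γ ^ 2 - 1) / (3 * γ ^ 2 + 1) =
      θ₄ * (18 * γ ^ 3 * (3 * γ ^ 2 + 1) - 6 * γ * (3 * γ - 1)
        - lam * ((3 * γ ^ 2 - 1) * (3 * γ - 1) * (3 * γ ^ 2 + 1)))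
        / ((3 * γ - 1) * (3 * γ ^ 2 + 1) ^ 2) := by
    generalize 3 * γ - 1 = P at hP ⊢
    field_simp
  rw [h]
  refine div_nonneg (mul_nonneg hθ₄ ?_) hPQ.le
  have hM : 0 ≤ (3 * γ ^ 2 - 1) * (3 * γ - 1) * (3 * γ ^ 2 + 1) := by
    have : 0 ≤ 3 * γ ^ 2 - 1 := by linarith
    positivity
  nlinarith [mul_le_of_le_one_left hM hlam]

theorem tvd3_weight_shift_w2_nonneg (hP : 0 < 3 * γ - 1) (hθ₄ : 0 ≤ θ₄) (hlam₀ : 0 ≤ lam)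
    (hlam : lam ≤ 1) :
    0 ≤ lam * θ₄ * (3 * γ ^ 2 - 1) / (3 * γ ^ 2 + 1)
      + 2 * (6 * γ * θ₄ / (3 * γ ^ 2 + 1) ^ 2) * (lam * ((3 * γ ^ 2 + 1) / (6 * γ)))
        * (1 - lam * ((3 * γ ^ 2 + 1) / (6 * γ))) := by
  have hγ : γ ≠ 0 := by rintro rfl; linarith
  have h : lam * θ₄ * (3 * γ ^ 2 - 1) / (3 * γ ^ 2 + 1)
      + 2 * (6 * γ * θ₄ / (3 * γ ^ 2 + 1) ^ 2) * (lam * ((3 * γ ^ 2 + 1) / (6 * γ)))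
        * (1 - lam * ((3 * γ ^ 2 + 1) / (6 * γ))) = lam * θ₄ * (3 * γ - lam) / (3 * γ) := by
    field_simp
    ring
  rw [h]
  exact div_nonneg (mul_nonneg (mul_nonneg hlam₀ hθ₄) (by linarith)) (by linarith)

end Coefficients

section Stages

variable {N : ℕ} {γ θ₃ θ₄ mu lam : ℝ} {wn w2 w3 wnext : ZMod N → ℝ}

theorem tvd3_stage2_eq
    (h2 : ∀ j : ZMod N,
      w2 j + ((3 * γ - 1) / (6 * γ)) * mu * (w2 j - w2 (j - 1)) =
        wn j - lam * ((3 * γ - 1) / (6 * γ)) * (wn j - wn (j - 1))) :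
    w2 + ((3 * γ - 1) / (6 * γ) * mu) • (w2 - shift w2) =
      (1 - lam * ((3 * γ - 1) / (6 * γ))) • wn + (lam * ((3 * γ - 1) / (6 * γ))) • shift wn := by
  funext j
  simp only [Pi.add_apply, Pi.sub_apply, Pi.smul_apply, smul_eq_mul, shift_apply]
  linear_combination h2 j

theorem tvd3_stage3_eq (hγ : γ ≠ 0) (hP : 3 * γ - 1 ≠ 0)
    (hθ₃ : θ₃ = (3 * γ - 1) / (6 * γ ^ 2))
    (h2 : ∀ j : ZMod N,
      w2 j + ((3 * γ - 1) / (6 * γ)) * mu * (w2 j - w2 (j - 1)) =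
        wn j - lam * ((3 * γ - 1) / (6 * γ)) * (wn j - wn (j - 1)))
    (h3 : ∀ j : ZMod N,
      w3 j + (1 - θ₃) * ((γ + 1) / 2) * mu * (w3 j - w3 (j - 1)) =
        wn j
        - lam * ((1 - θ₃) * ((γ + 1) / 2) * (wn j - wn (j - 1))
            + θ₃ * ((-(6 * γ ^ 3 - 3 * γ ^ 2 + 1) / (2 * (3 * γ - 1))) * (wn j - wn (j - 1))
              + (γ * (3 * γ ^ 2 + 1) / (3 * γ - 1)) * (w2 j - w2 (j - 1))))
        - mu * θ₃ * (γ * (w2 j - w2 (j - 1)) + ((1 - γ) / 2) * (w3 j - w3 (j - 1)))) :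
    w3 + ((3 * γ ^ 2 + 1) / (6 * γ) * mu) • (w3 - shift w3) =
      (1 - lam * ((3 * γ ^ 2 + 1) / (6 * γ))) • w2 +
        (lam * ((3 * γ ^ 2 + 1) / (6 * γ))) • shift w2 := by
  subst hθ₃
  funext j
  simp only [Pi.add_apply, Pi.sub_apply, Pi.smul_apply, smul_eq_mul, shift_apply]
  linear_combination (norm := (field_simp; ring1)) h3 j - h2 j

theorem tvd3_final_stage_eq (hγ : γ ≠ 0) (hP : 3 * γ - 1 ≠ 0)
    (h2 : ∀ j : ZMod N,
      w2 j + ((3 * γ - 1) / (6 * γ)) * mu * (w2 j - w2 (j - 1)) =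
        wn j - lam * ((3 * γ - 1) / (6 * γ)) * (wn j - wn (j - 1)))
    (h3 : w3 + ((3 * γ ^ 2 + 1) / (6 * γ) * mu) • (w3 - shift w3) =
      (1 - lam * ((3 * γ ^ 2 + 1) / (6 * γ))) • w2 +
        (lam * ((3 * γ ^ 2 + 1) / (6 * γ))) • shift w2)
    (h4 : ∀ j : ZMod N,
      wnext j + (1 - θ₄) * mu * (wnext j - wnext (j - 1)) =
        wn j
        - θ₄ * (lam + mu) * ((3 * γ ^ 2 / (3 * γ ^ 2 + 1)) * (w2 j - w2 (j - 1))
            + (1 / (3 * γ ^ 2 + 1)) * (w3 j - w3 (j - 1)))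
        - (1 - θ₄) * lam * (wn j - wn (j - 1))) :
    let ω := 18 * γ ^ 3 * θ₄ / ((3 * γ - 1) * (3 * γ ^ 2 + 1))
    let c₀ := lam * (3 * γ ^ 2 + 1 - (6 * γ ^ 2 + 1) * θ₄) / (3 * γ ^ 2 + 1)
    let c₂ := lam * θ₄ * (3 * γ ^ 2 - 1) / (3 * γ ^ 2 + 1)
    let d := 6 * γ * θ₄ / (3 * γ ^ 2 + 1) ^ 2
    let x := lam * ((3 * γ ^ 2 + 1) / (6 * γ))
    wnext + ((1 - θ₄) * mu) • (wnext - shift wnext) =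
      (1 - ω - c₀) • wn + c₀ • shift wn +
        ((ω - d - c₂) • w2 + c₂ • shift w2 + d • ((1 - x) • w3 + x • shift w3)) := by
  intro ω c₀ c₂ d x
  have hQ : 3 * γ ^ 2 + 1 ≠ 0 := by positivity
  funext j
  have h3j := congrFun h3 j
  simp only [Pi.add_apply, Pi.sub_apply, Pi.smul_apply, smul_eq_mul, shift_apply] at h3j ⊢
  linear_combination (norm := (simp only [ω, c₀, c₂, d, x]; field_simp; ring1))
    h4 j - ω * h2 j - d * h3j

end Stages

/-- Lemma 3.1: L∞ stability and TVD property of the TVD3 scheme built from the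
γ-family of third-order IMEX Butcher tableaux by convex combination with the
first-order IMEX Euler scheme. -/
theorem TVD3_Linf_stable_and_TVD {N : ℕ} [NeZero N] (γ θ₃ θ₄ mu lam : ℝ)
    (hγ : Real.sqrt 3 / 3 ≤ γ)
    (hθ₃ : θ₃ = (3 * γ - 1) / (6 * γ ^ 2))
    (hθ₄0 : 0 ≤ θ₄) (hθ₄ : θ₄ < (3 * γ - 1) * (3 * γ ^ 2 + 1) / (18 * γ ^ 3))
    (hmu : 0 ≤ mu) (hlam0 : 0 ≤ lam)
    (hlam : lam ≤ (18 * γ ^ 3 * θ₄ - (3 * γ - 1) * (3 * γ ^ 2 + 1)) /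
        ((3 * γ - 1) * ((6 * γ ^ 2 + 1) * θ₄ - (3 * γ ^ 2 + 1))))
    (wn w2 w3 wnext : ZMod N → ℝ)
    (h2 : ∀ j : ZMod N,
      w2 j + ((3 * γ - 1) / (6 * γ)) * mu * (w2 j - w2 (j - 1)) =
        wn j - lam * ((3 * γ - 1) / (6 * γ)) * (wn j - wn (j - 1)))
    (h3 : ∀ j : ZMod N,
      w3 j + (1 - θ₃) * ((γ + 1) / 2) * mu * (w3 j - w3 (j - 1)) =
        wn j
        - lam * ((1 - θ₃) * ((γ + 1) / 2) * (wn j - wn (j - 1))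
            + θ₃ * ((-(6 * γ ^ 3 - 3 * γ ^ 2 + 1) / (2 * (3 * γ - 1))) * (wn j - wn (j - 1))
              + (γ * (3 * γ ^ 2 + 1) / (3 * γ - 1)) * (w2 j - w2 (j - 1))))
        - mu * θ₃ * (γ * (w2 j - w2 (j - 1)) + ((1 - γ) / 2) * (w3 j - w3 (j - 1))))
    (h4 : ∀ j : ZMod N,
      wnext j + (1 - θ₄) * mu * (wnext j - wnext (j - 1)) =
        wn j
        - θ₄ * (lam + mu) * ((3 * γ ^ 2 / (3 * γ ^ 2 + 1)) * (w2 j - w2 (j - 1))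
            + (1 / (3 * γ ^ 2 + 1)) * (w3 j - w3 (j - 1)))
        - (1 - θ₄) * lam * (wn j - wn (j - 1))) :
    Finset.univ.sup' Finset.univ_nonempty (fun j : ZMod N => |wnext j|) ≤
      Finset.univ.sup' Finset.univ_nonempty (fun j : ZMod N => |wn j|) ∧
    (∑ j : ZMod N, |wnext (j + 1) - wnext j|) ≤ ∑ j : ZMod N, |wn (j + 1) - wn j| := by
  have hγ₀ : 0 < γ := lt_of_lt_of_le (by positivity) hγ
  have hγ₂ := one_le_three_mul_sq_of_sqrt_three_div_three_le hγ
  have hP : 0 < 3 * γ - 1 := by nlinarith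
  have hθ₄' := tvd3_theta_mul_lt hγ₀ hθ₄
  have hlam' := tvd3_lam_mul_le hP hθ₄' hlam
  have hlam₁ := tvd3_lam_le_one hP hθ₄0 hθ₄' hlam'
  have hθ₄₁ : θ₄ ≤ 1 := by nlinarith
  have hs₀ : 0 ≤ (3 * γ - 1) / (6 * γ) := div_nonneg hP.le (by positivity)
  have hs₁ : lam * ((3 * γ - 1) / (6 * γ)) ≤ 1 :=
    mul_le_one₀ hlam₁ hs₀ (div_le_one_of_le₀ (by linarith) (by positivity))
  have E3 := tvd3_stage3_eq hγ₀.ne' hP.ne' hθ₃ h2 h3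
  have hseminorm : ∀ p : Seminorm ℝ (ZMod N → ℝ), (∀ v, p (shift v) ≤ p v) → p wnext ≤ p wn :=
    fun p hS => p.le_of_tvd3_stages hS (mul_nonneg hs₀ hmu) (mul_nonneg (by positivity) hmu)
      (mul_nonneg (sub_nonneg.2 hθ₄₁) hmu) (mul_nonneg hlam0 hs₀) hs₁
      (tvd3_weight_wn_nonneg hP hlam') (div_nonneg (mul_nonneg hlam0 (by linarith)) (by positivity))
      (tvd3_weight_w2_nonneg hγ₂ hP hθ₄0 hlam₁)
      (div_nonneg (mul_nonneg (mul_nonneg hlam0 hθ₄0) (by linarith)) (by positivity))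
      (by positivity) (tvd3_weight_shift_w2_nonneg hP hθ₄0 hlam0 hlam₁) (by ring)
      (tvd3_stage2_eq h2) E3 (tvd3_final_stage_eq hγ₀.ne' hP.ne' h2 E3 h4)
  refine ⟨?_, hseminorm totalVariation fun v => (totalVariation_shift v).le⟩
  simpa only [sup'_abs_eq_norm, coe_normSeminorm] using hseminorm (normSeminorm ℝ _) norm_shift_le
end

section
/- (Theorem 3.2: L∞ stability and TVD property of the convex-combination s-stage TVD IMEX-RK scheme, CK type.) Let s ≥ 1 and let Ã, A ∈ ℝ^{s×s} define two Butcher tableaux with à strictly lower triangular, A lower triangular with zero first column and a₁₁ = 0, and set c̃_k = ∑_{l<k} ã_{kl}, c_k = ∑_{l≤k} a_{kl}; assume the vectors b̃ and b coincide with the last rows of à and A respectively. Let θ ∈ [0,1]^s with θ₁ = 1, λ ≥ 0 and μ ≥ 0. For k = 1,…,s and l ≥ 2 define 𝒜_k = θ_k a_{kk} + (1-θ_k) c_k, 𝒜̃_k = θ_k ã_{k1} + (1-θ_k) c̃_k, ℬ_{kl} = θ_k a_{kl}/𝒜_l, ℬ̃_{kl} = θ_k ã_{kl}, and recursively 𝒞_k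 = 𝒜̃_k - ∑_{l=2}^{k-1} ℬ_{kl} 𝒞_l, 𝒞_{kl} = ℬ̃_{kl} - ∑_{r=l+1}^{k-1} ℬ_{kr} 𝒞_{rl}, 𝒟_k = 1 - λ 𝒜̃_k - ∑_{l=2}^{k-1} ℬ_{kl} 𝒟_l, 𝒟_{kl} = ℬ_{kl} - λ ℬ̃_{kl} - ∑_{r=l+1}^{k-1} ℬ_{kr} 𝒟_{rl}. Assume that for all k = 2,…,s and l = 1,…,k-1 one has 𝒜_k > 0, 𝒞_k ≥ 0, 𝒟_k ≥ 0, 𝒞_{kl} ≥ 0, 𝒟_{kl} ≥ 0. Suppose the periodic grid functions w⁽¹⁾,…,w⁽ˢ⁾ satisfy w⁽¹⁾ = wⁿ and, for k = 2,…,s and every index j, w⁽ᵏ⁾_j + (1-θ_k) c_k μ Δ_j w⁽ᵏ⁾ = wⁿ_j - λ[(1-θ_k) c̃_k Δ_j wⁿ + θ_k ∑_{l=1}^{k-1} ã_{kl} Δ_j w⁽ˡ⁾] - μ θ_k ∑_{l=1}^{k} a_{kl} Δ_j w⁽ˡ⁾. Then the update w^{n+1} = w⁽ˢ⁾ satisfies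 ‖w^{n+1}‖∞ ≤ ‖wⁿ‖∞ and TV(w^{n+1}) ≤ TV(wⁿ); in particular the stability restriction on λ is independent of μ (independent of ε). -/
open Finset

private lemma shift_sum {N : ℕ} [NeZero N] (g : ZMod N → ℝ) :
    ∑ j : ZMod N, g (j - 1) = ∑ j : ZMod N, g j :=
  Equiv.sum_comp (Equiv.subRight (1 : ZMod N)) g

/-- Theorem 3.2: L∞ stability and TVD property of the convex-combination s-stage TVD
IMEX-RK scheme of CK type (zero first implicit column), where `b̃` and `b` coincide with
the last rows of the tableaux, so the final update coincides with the last stage `W s`.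
The stability restriction involves only `λ`; no condition on `μ ≥ 0` is imposed. -/
theorem TVD_IMEX_RK_CK_Linf_stable_and_TVD {N : ℕ} [NeZero N] (s : ℕ) (hs : 1 ≤ s)
    (Atil A : ℕ → ℕ → ℝ)
    (hAtil_lower : ∀ k l, k ≤ l → Atil k l = 0)
    (hA_lower : ∀ k l, k < l → A k l = 0)
    (hA_col1 : ∀ k, A k 1 = 0)
    (θ : ℕ → ℝ) (hθ : ∀ k, 1 ≤ k → k ≤ s → 0 ≤ θ k ∧ θ k ≤ 1) (hθ1 : θ 1 = 1)
    (lam mu : ℝ) (hlam : 0 ≤ lam) (hmu : 0 ≤ mu)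
    (ctil c calA calAt C D : ℕ → ℝ) (calB calBt Ckl Dkl : ℕ → ℕ → ℝ)
    (hctil : ∀ k, ctil k = ∑ l ∈ Finset.Ico 1 k, Atil k l)
    (hc : ∀ k, c k = ∑ l ∈ Finset.Icc 1 k, A k l)
    (hcalA : ∀ k, calA k = θ k * A k k + (1 - θ k) * c k)
    (hcalAt : ∀ k, calAt k = θ k * Atil k 1 + (1 - θ k) * ctil k)
    (hcalB : ∀ k l, calB k l = θ k * A k l / calA l)
    (hcalBt : ∀ k l, calBt k l = θ k * Atil k l)
    (hC : ∀ k, C k = calAt k - ∑ l ∈ Finset.Icc 2 (k - 1), calB k l * C l)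
    (hCkl : ∀ k l, Ckl k l =
      calBt k l - ∑ r ∈ Finset.Icc (l + 1) (k - 1), calB k r * Ckl r l)
    (hD : ∀ k, D k = 1 - lam * calAt k - ∑ l ∈ Finset.Icc 2 (k - 1), calB k l * D l)
    (hDkl : ∀ k l, Dkl k l = calB k l - lam * calBt k l
      - ∑ r ∈ Finset.Icc (l + 1) (k - 1), calB k r * Dkl r l)
    (hsigns : ∀ k, 2 ≤ k → k ≤ s →
      0 < calA k ∧ 0 ≤ C k ∧ 0 ≤ D k ∧
        ∀ l, 1 ≤ l → l < k → 0 ≤ Ckl k l ∧ 0 ≤ Dkl k l)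
    (wn : ZMod N → ℝ) (W : ℕ → ZMod N → ℝ)
    (hW1 : W 1 = wn)
    (hstage : ∀ k, 2 ≤ k → k ≤ s → ∀ j : ZMod N,
      W k j + (1 - θ k) * c k * mu * (W k j - W k (j - 1)) =
        wn j
        - lam * ((1 - θ k) * ctil k * (wn j - wn (j - 1))
            + θ k * ∑ l ∈ Finset.Ico 1 k, Atil k l * (W l j - W l (j - 1)))
        - mu * θ k * ∑ l ∈ Finset.Icc 1 k, A k l * (W l j - W l (j - 1))) :
    Finset.univ.sup' Finset.univ_nonempty (fun j : ZMod N => |W s j|) ≤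
      Finset.univ.sup' Finset.univ_nonempty (fun j : ZMod N => |wn j|) ∧
    (∑ j : ZMod N, |W s (j + 1) - W s j|) ≤ ∑ j : ZMod N, |wn (j + 1) - wn j| := by
  set M := Finset.univ.sup' Finset.univ_nonempty (fun j : ZMod N => |wn j|) with hMdef
  have hM : ∀ j, |wn j| ≤ M := fun j => Finset.le_sup' (fun j : ZMod N => |wn j|) (Finset.mem_univ j)
  set TV0 := ∑ j : ZMod N, |wn (j + 1) - wn j| with hTVdef
  have hTV0 : 0 ≤ TV0 := Finset.sum_nonneg fun j _ => abs_nonneg _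
  -- coefficient sum identity
  have hT : ∀ k, 2 ≤ k →
      D k + lam * C k + ∑ l ∈ Icc 2 (k - 1), (Dkl k l + lam * Ckl k l) = 1 := by
    intro k
    induction k using Nat.strong_induction_on with
    | _ k IH =>
      intro hk2
      have h1 : ∑ l ∈ Icc 2 (k - 1), (Dkl k l + lam * Ckl k l)
          = ∑ l ∈ Icc 2 (k - 1), calB k l
            - ∑ l ∈ Icc 2 (k - 1), ∑ r ∈ Icc (l + 1) (k - 1),
                calB k r * (Dkl r l + lam * Ckl r l) := by
        rw [← Finset.sum_sub_distrib]
        refine Finset.sum_congr rfl fun l hl => ?_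
        rw [hDkl k l, hCkl k l]
        have h2 : ∑ r ∈ Icc (l + 1) (k - 1), calB k r * (Dkl r l + lam * Ckl r l)
            = (∑ r ∈ Icc (l + 1) (k - 1), calB k r * Dkl r l)
              + lam * ∑ r ∈ Icc (l + 1) (k - 1), calB k r * Ckl r l := by
          rw [Finset.mul_sum, ← Finset.sum_add_distrib]
          exact Finset.sum_congr rfl fun r _ => by ring
        rw [h2]; ring
      have h2 : ∑ l ∈ Icc 2 (k - 1), ∑ r ∈ Icc (l + 1) (k - 1),
            calB k r * (Dkl r l + lam * Ckl r l)
          = ∑ r ∈ Icc 2 (k - 1), calB k r * (1 - D r - lam * C r) := by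
        rw [Finset.sum_comm' (t' := Icc 2 (k - 1)) (s' := fun r => Icc 2 (r - 1))
          (fun x y => by simp only [mem_Icc]; omega)]
        refine Finset.sum_congr rfl fun r hr => ?_
        rw [← Finset.mul_sum]
        simp only [mem_Icc] at hr
        have hTr := IH r (by omega) hr.1
        congr 1
        linarith
      have h3 : ∑ r ∈ Icc 2 (k - 1), calB k r * (1 - D r - lam * C r)
          = ∑ r ∈ Icc 2 (k - 1), calB k r
            - (∑ r ∈ Icc 2 (k - 1), calB k r * D r
              + lam * ∑ r ∈ Icc 2 (k - 1), calB k r * C r) := by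
        rw [Finset.mul_sum, ← Finset.sum_add_distrib, ← Finset.sum_sub_distrib]
        exact Finset.sum_congr rfl fun r _ => by ring
      rw [hD k, hC k, h1, h2, h3]
      ring
  -- the rearranged per-stage identity
  have hE : ∀ k, 2 ≤ k → k ≤ s → ∀ j : ZMod N,
      W k j + calA k * mu * (W k j - W k (j - 1)) =
        D k * wn j + lam * (C k * wn (j - 1))
        + ∑ l ∈ Icc 2 (k - 1), (Dkl k l * W l j + lam * (Ckl k l * W l (j - 1))) := by
    intro k
    induction k using Nat.strong_induction_on with
    | _ k IH =>
      intro hk2 hks j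
      have h0 := hstage k hk2 hks j
      have hA1 : ∑ l ∈ Icc 1 k, A k l * (W l j - W l (j - 1))
          = (∑ l ∈ Icc 2 (k - 1), A k l * (W l j - W l (j - 1)))
            + A k k * (W k j - W k (j - 1)) := by
        have e1 : ∑ l ∈ Icc 1 k, A k l * (W l j - W l (j - 1))
            = ∑ l ∈ Icc 2 k, A k l * (W l j - W l (j - 1)) :=
          (Finset.sum_subset (Finset.Icc_subset_Icc_left one_le_two)
            (fun x hx hnx => by
              have hx1 : x = 1 := by simp only [mem_Icc] at hx hnx; omega
              rw [hx1, hA_col1, zero_mul])).symm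
        have hk1 : k - 1 + 1 = k := by omega
        rw [e1, ← hk1, Finset.sum_Icc_succ_top (by omega), hk1]
      have hA2 : ∑ l ∈ Ico 1 k, Atil k l * (W l j - W l (j - 1))
          = Atil k 1 * (wn j - wn (j - 1))
            + ∑ l ∈ Icc 2 (k - 1), Atil k l * (W l j - W l (j - 1)) := by
        have e1 : Ico 1 k = Icc 1 (k - 1) := by
          rw [← Finset.Ico_add_one_right_eq_Icc]; congr 1; omega
        have e2 : (Icc 1 (k - 1)).erase 1 = Icc 2 (k - 1) := by
          rw [Finset.Icc_erase_left]; ext x; simp only [mem_Ioc, mem_Icc]; omega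
        rw [e1, ← Finset.add_sum_erase _ _ (show (1:ℕ) ∈ Icc 1 (k - 1) by
          simp only [mem_Icc]; omega), e2, hW1]
      rw [hA1, hA2] at h0
      have hBB : ∀ l ∈ Icc 2 (k - 1), calB k l * calA l = θ k * A k l := by
        intro l hl
        simp only [mem_Icc] at hl
        rw [hcalB k l, div_mul_cancel₀]
        exact ((hsigns l hl.1 (by omega)).1).ne'
      have key : W k j + calA k * mu * (W k j - W k (j - 1))
          = wn j - lam * (calAt k * (wn j - wn (j - 1)))
            - ∑ l ∈ Icc 2 (k - 1),
                (lam * (calBt k l * (W l j - W l (j - 1)))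
                  + calB k l * ((W l j + calA l * mu * (W l j - W l (j - 1))) - W l j)) := by
        have hsum1 : ∑ l ∈ Icc 2 (k - 1),
              (lam * (calBt k l * (W l j - W l (j - 1)))
                + calB k l * ((W l j + calA l * mu * (W l j - W l (j - 1))) - W l j))
            = lam * (θ k * ∑ l ∈ Icc 2 (k - 1), Atil k l * (W l j - W l (j - 1)))
              + mu * θ k * ∑ l ∈ Icc 2 (k - 1), A k l * (W l j - W l (j - 1)) := by
          rw [Finset.mul_sum, Finset.mul_sum, Finset.mul_sum, ← Finset.sum_add_distrib]
          refine Finset.sum_congr rfl fun l hl => ?_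
          rw [hcalBt k l]
          linear_combination (mu * (W l j - W l (j - 1))) * hBB l hl
        linear_combination h0 + hsum1 + (mu * (W k j - W k (j - 1))) * hcalA k
          + (lam * (wn j - wn (j - 1))) * hcalAt k
      have hIH : ∀ l ∈ Icc 2 (k - 1),
          W l j + calA l * mu * (W l j - W l (j - 1))
            = D l * wn j + lam * (C l * wn (j - 1))
              + ∑ r ∈ Icc 2 (l - 1), (Dkl l r * W r j + lam * (Ckl l r * W r (j - 1))) := by
        intro l hl
        simp only [mem_Icc] at hl
        exact IH l (by omega) hl.1 (by omega) j
      have hLHSsum : ∑ l ∈ Icc 2 (k - 1),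
            (lam * (calBt k l * (W l j - W l (j - 1)))
              + calB k l * ((W l j + calA l * mu * (W l j - W l (j - 1))) - W l j))
          = (∑ l ∈ Icc 2 (k - 1),
              (lam * (calBt k l * (W l j - W l (j - 1)))
                + (calB k l * (D l * wn j) + lam * (calB k l * (C l * wn (j - 1)))
                  - calB k l * W l j)))
            + ∑ l ∈ Icc 2 (k - 1), ∑ r ∈ Icc 2 (l - 1),
                calB k l * (Dkl l r * W r j + lam * (Ckl l r * W r (j - 1))) := by
        rw [← Finset.sum_add_distrib]
        refine Finset.sum_congr rfl fun l hl => ?_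
        rw [hIH l hl]
        have e := Finset.mul_sum (Icc 2 (l - 1))
          (fun r => Dkl l r * W r j + lam * (Ckl l r * W r (j - 1))) (calB k l)
        linear_combination e
      have hswap : ∑ l ∈ Icc 2 (k - 1), ∑ r ∈ Icc 2 (l - 1),
            calB k l * (Dkl l r * W r j + lam * (Ckl l r * W r (j - 1)))
          = ∑ l ∈ Icc 2 (k - 1), ∑ r ∈ Icc (l + 1) (k - 1),
              calB k r * (Dkl r l * W l j + lam * (Ckl r l * W l (j - 1))) :=
        Finset.sum_comm' (fun x y => by simp only [mem_Icc]; omega)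
      have hexp : ∀ l ∈ Icc 2 (k - 1),
          Dkl k l * W l j + lam * (Ckl k l * W l (j - 1))
            = ((calB k l - lam * calBt k l) * W l j + lam * (calBt k l * W l (j - 1)))
              - ∑ r ∈ Icc (l + 1) (k - 1),
                  calB k r * (Dkl r l * W l j + lam * (Ckl r l * W l (j - 1))) := by
        intro l _
        rw [hDkl k l, hCkl k l]
        have e1 : ∑ r ∈ Icc (l + 1) (k - 1),
              calB k r * (Dkl r l * W l j + lam * (Ckl r l * W l (j - 1)))
            = (∑ r ∈ Icc (l + 1) (k - 1), calB k r * Dkl r l) * W l j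
              + lam * ((∑ r ∈ Icc (l + 1) (k - 1), calB k r * Ckl r l) * W l (j - 1)) := by
          rw [Finset.sum_mul, Finset.sum_mul, Finset.mul_sum, ← Finset.sum_add_distrib]
          exact Finset.sum_congr rfl fun r _ => by ring
        rw [e1]; ring
      rw [key, hLHSsum, hswap, Finset.sum_congr rfl hexp, Finset.sum_sub_distrib,
        hD k, hC k]
      have hfinal : ∑ l ∈ Icc 2 (k - 1),
            (lam * (calBt k l * (W l j - W l (j - 1)))
              + (calB k l * (D l * wn j) + lam * (calB k l * (C l * wn (j - 1)))
                - calB k l * W l j))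
          + ∑ l ∈ Icc 2 (k - 1),
              ((calB k l - lam * calBt k l) * W l j + lam * (calBt k l * W l (j - 1)))
          = (∑ l ∈ Icc 2 (k - 1), calB k l * D l) * wn j
            + lam * ((∑ l ∈ Icc 2 (k - 1), calB k l * C l) * wn (j - 1)) := by
        rw [← Finset.sum_add_distrib, Finset.sum_mul, Finset.sum_mul, Finset.mul_sum,
          ← Finset.sum_add_distrib]
        exact Finset.sum_congr rfl fun l _ => by ring
      linear_combination -hfinal
  have hshiftW : ∀ (v : ZMod N → ℝ),
      ∑ j : ZMod N, |v j - v (j - 1)| = ∑ j : ZMod N, |v (j + 1) - v j| := by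
    intro v
    have := shift_sum (N := N) (fun j => |v (j + 1) - v j|)
    simpa [sub_add_cancel] using this
  have hmain : ∀ k, 1 ≤ k → k ≤ s →
      (∀ j, |W k j| ≤ M) ∧ (∑ j : ZMod N, |W k (j + 1) - W k j|) ≤ TV0 := by
    intro k
    induction k using Nat.strong_induction_on with
    | _ k IH =>
      intro hk1 hks
      rcases eq_or_lt_of_le hk1 with h1 | hk2
      · rw [← h1, hW1]
        exact ⟨hM, le_refl TV0⟩
      · obtain ⟨hAk, hCk, hDk, hkl⟩ := hsigns k hk2 hks
        have ha : 0 ≤ calA k * mu := mul_nonneg hAk.le hmu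
        have hTk := hT k hk2
        have hWl : ∀ l ∈ Icc 2 (k - 1),
            (∀ j, |W l j| ≤ M) ∧ (∑ j : ZMod N, |W l (j + 1) - W l j|) ≤ TV0 := by
          intro l hl; simp only [mem_Icc] at hl
          exact IH l (by omega) (by omega) (by omega)
        have hcoef : ∀ l ∈ Icc 2 (k - 1), 0 ≤ Dkl k l ∧ 0 ≤ Ckl k l := by
          intro l hl; simp only [mem_Icc] at hl
          exact ⟨(hkl l (by omega) (by omega)).2, (hkl l (by omega) (by omega)).1⟩
        have hM0 : 0 ≤ M := le_trans (abs_nonneg _) (hM 0)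
        constructor
        · -- L∞ bound
          obtain ⟨j₀, -, hj₀⟩ := Finset.exists_mem_eq_sup' (Finset.univ_nonempty)
            (fun j : ZMod N => |W k j|)
          intro j
          have hjle : |W k j| ≤ |W k j₀| := by
            rw [← hj₀]; exact Finset.le_sup' (fun j : ZMod N => |W k j|) (Finset.mem_univ j)
          refine le_trans hjle ?_
          have e := hE k hk2 hks j₀
          have hsum : |∑ l ∈ Icc 2 (k - 1), (Dkl k l * W l j₀ + lam * (Ckl k l * W l (j₀ - 1)))|
              ≤ (∑ l ∈ Icc 2 (k - 1), (Dkl k l + lam * Ckl k l)) * M := by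
            refine le_trans (Finset.abs_sum_le_sum_abs _ _) ?_
            rw [Finset.sum_mul]
            refine Finset.sum_le_sum fun l hl => ?_
            obtain ⟨hD0, hC0⟩ := hcoef l hl
            obtain ⟨hWb, -⟩ := hWl l hl
            have b1 : |Dkl k l * W l j₀ + lam * (Ckl k l * W l (j₀ - 1))|
                ≤ |Dkl k l * W l j₀| + |lam * (Ckl k l * W l (j₀ - 1))| := abs_add_le _ _
            have b2 : |Dkl k l * W l j₀| ≤ Dkl k l * M := by
              rw [abs_mul, abs_of_nonneg hD0]
              exact mul_le_mul_of_nonneg_left (hWb _) hD0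
            have b3 : |lam * (Ckl k l * W l (j₀ - 1))| ≤ lam * (Ckl k l * M) := by
              rw [abs_mul, abs_mul, abs_of_nonneg hlam, abs_of_nonneg hC0]
              exact mul_le_mul_of_nonneg_left
                (mul_le_mul_of_nonneg_left (hWb _) hC0) hlam
            have b4 : (Dkl k l + lam * Ckl k l) * M = Dkl k l * M + lam * (Ckl k l * M) := by
              ring
            linarith
          have hb2 : |D k * wn j₀| ≤ D k * M := by
            rw [abs_mul, abs_of_nonneg hDk]
            exact mul_le_mul_of_nonneg_left (hM _) hDk
          have hb3 : |lam * (C k * wn (j₀ - 1))| ≤ lam * (C k * M) := by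
            rw [abs_mul, abs_mul, abs_of_nonneg hlam, abs_of_nonneg hCk]
            exact mul_le_mul_of_nonneg_left
              (mul_le_mul_of_nonneg_left (hM _) hCk) hlam
          have hRb : |W k j₀ + calA k * mu * (W k j₀ - W k (j₀ - 1))| ≤ M := by
            rw [e]
            refine le_trans (abs_add_three _ _ _) ?_
            have hsum2 : D k * M + lam * (C k * M)
                + (∑ l ∈ Icc 2 (k - 1), (Dkl k l + lam * Ckl k l)) * M = M := by
              linear_combination M * hTk
            linarith
          have h' : (1 + calA k * mu) * W k j₀
              = (W k j₀ + calA k * mu * (W k j₀ - W k (j₀ - 1)))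
                + calA k * mu * W k (j₀ - 1) := by ring
          have habs : (1 + calA k * mu) * |W k j₀|
              ≤ |W k j₀ + calA k * mu * (W k j₀ - W k (j₀ - 1))|
                + calA k * mu * |W k (j₀ - 1)| := by
            calc (1 + calA k * mu) * |W k j₀| = |(1 + calA k * mu) * W k j₀| := by
                  rw [abs_mul, abs_of_nonneg (by linarith : (0:ℝ) ≤ 1 + calA k * mu)]
              _ ≤ |W k j₀ + calA k * mu * (W k j₀ - W k (j₀ - 1))|
                  + |calA k * mu * W k (j₀ - 1)| := by rw [h']; exact abs_add_le _ _
              _ = _ := by rw [abs_mul, abs_of_nonneg ha]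
          have hb1 : |W k (j₀ - 1)| ≤ |W k j₀| := by
            rw [← hj₀]; exact Finset.le_sup' (fun j : ZMod N => |W k j|) (Finset.mem_univ _)
          nlinarith [mul_le_mul_of_nonneg_left hb1 ha]
        · -- TV bound
          have ediff : ∀ j : ZMod N,
              (W k (j + 1) - W k j)
                + calA k * mu * ((W k (j + 1) - W k j) - (W k j - W k (j - 1)))
              = D k * (wn (j + 1) - wn j) + lam * (C k * (wn j - wn (j - 1)))
                + ∑ l ∈ Icc 2 (k - 1),
                    (Dkl k l * (W l (j + 1) - W l j)
                      + lam * (Ckl k l * (W l j - W l (j - 1)))) := by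
            intro j
            have e1 := hE k hk2 hks (j + 1)
            have e0 := hE k hk2 hks j
            rw [add_sub_cancel_right] at e1
            have hsd : ∑ l ∈ Icc 2 (k - 1),
                  (Dkl k l * (W l (j + 1) - W l j) + lam * (Ckl k l * (W l j - W l (j - 1))))
                = (∑ l ∈ Icc 2 (k - 1), (Dkl k l * W l (j + 1) + lam * (Ckl k l * W l j)))
                  - ∑ l ∈ Icc 2 (k - 1), (Dkl k l * W l j + lam * (Ckl k l * W l (j - 1))) := by
              rw [← Finset.sum_sub_distrib]
              exact Finset.sum_congr rfl fun l _ => by ring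
            linear_combination e1 - e0 - hsd
          have h5 : ∑ j : ZMod N, |W k (j + 1) - W k j|
              ≤ ∑ j : ZMod N, |D k * (wn (j + 1) - wn j) + lam * (C k * (wn j - wn (j - 1)))
                  + ∑ l ∈ Icc 2 (k - 1),
                      (Dkl k l * (W l (j + 1) - W l j)
                        + lam * (Ckl k l * (W l j - W l (j - 1))))| := by
            have hpt : ∀ j : ZMod N,
                |W k (j + 1) - W k j| + calA k * mu * |W k (j + 1) - W k j|
                  - calA k * mu * |W k j - W k (j - 1)|
                ≤ |D k * (wn (j + 1) - wn j) + lam * (C k * (wn j - wn (j - 1)))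
                    + ∑ l ∈ Icc 2 (k - 1),
                        (Dkl k l * (W l (j + 1) - W l j)
                          + lam * (Ckl k l * (W l j - W l (j - 1))))| := by
              intro j
              rw [← ediff j]
              have h' : (1 + calA k * mu) * (W k (j + 1) - W k j)
                  = ((W k (j + 1) - W k j)
                      + calA k * mu * ((W k (j + 1) - W k j) - (W k j - W k (j - 1))))
                    + calA k * mu * (W k j - W k (j - 1)) := by ring
              have h2 := abs_add_le
                ((W k (j + 1) - W k j)
                  + calA k * mu * ((W k (j + 1) - W k j) - (W k j - W k (j - 1))))
                (calA k * mu * (W k j - W k (j - 1)))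
              rw [← h', abs_mul, abs_mul,
                abs_of_nonneg (by linarith : (0:ℝ) ≤ 1 + calA k * mu),
                abs_of_nonneg ha] at h2
              nlinarith [abs_nonneg (W k (j + 1) - W k j)]
            have h3 := Finset.sum_le_sum (fun j (_ : j ∈ (Finset.univ : Finset (ZMod N))) => hpt j)
            rw [Finset.sum_sub_distrib, Finset.sum_add_distrib, ← Finset.mul_sum,
              ← Finset.mul_sum, hshiftW (W k)] at h3
            linarith
          refine le_trans h5 ?_
          have hpt2 : ∀ j : ZMod N,
              |D k * (wn (j + 1) - wn j) + lam * (C k * (wn j - wn (j - 1)))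
                + ∑ l ∈ Icc 2 (k - 1),
                    (Dkl k l * (W l (j + 1) - W l j)
                      + lam * (Ckl k l * (W l j - W l (j - 1))))|
              ≤ D k * |wn (j + 1) - wn j| + lam * (C k * |wn j - wn (j - 1)|)
                + ∑ l ∈ Icc 2 (k - 1),
                    (Dkl k l * |W l (j + 1) - W l j|
                      + lam * (Ckl k l * |W l j - W l (j - 1)|)) := by
            intro j
            refine le_trans (abs_add_three _ _ _) ?_
            have b1 : |D k * (wn (j + 1) - wn j)| = D k * |wn (j + 1) - wn j| := by
              rw [abs_mul, abs_of_nonneg hDk]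
            have b2 : |lam * (C k * (wn j - wn (j - 1)))|
                = lam * (C k * |wn j - wn (j - 1)|) := by
              rw [abs_mul, abs_mul, abs_of_nonneg hlam, abs_of_nonneg hCk]
            have b3 : |∑ l ∈ Icc 2 (k - 1),
                  (Dkl k l * (W l (j + 1) - W l j)
                    + lam * (Ckl k l * (W l j - W l (j - 1))))|
                ≤ ∑ l ∈ Icc 2 (k - 1),
                    (Dkl k l * |W l (j + 1) - W l j|
                      + lam * (Ckl k l * |W l j - W l (j - 1)|)) := by
              refine le_trans (Finset.abs_sum_le_sum_abs _ _) ?_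
              refine Finset.sum_le_sum fun l hl => ?_
              obtain ⟨hD0, hC0⟩ := hcoef l hl
              have c1 := abs_add_le (Dkl k l * (W l (j + 1) - W l j))
                (lam * (Ckl k l * (W l j - W l (j - 1))))
              have c2 : |Dkl k l * (W l (j + 1) - W l j)|
                  = Dkl k l * |W l (j + 1) - W l j| := by rw [abs_mul, abs_of_nonneg hD0]
              have c3 : |lam * (Ckl k l * (W l j - W l (j - 1)))|
                  = lam * (Ckl k l * |W l j - W l (j - 1)|) := by
                rw [abs_mul, abs_mul, abs_of_nonneg hlam, abs_of_nonneg hC0]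
              linarith
            linarith
          refine le_trans (Finset.sum_le_sum (fun j _ => hpt2 j)) ?_
          have heq1 : ∑ j : ZMod N,
              (D k * |wn (j + 1) - wn j| + lam * (C k * |wn j - wn (j - 1)|)
                + ∑ l ∈ Icc 2 (k - 1),
                    (Dkl k l * |W l (j + 1) - W l j|
                      + lam * (Ckl k l * |W l j - W l (j - 1)|)))
              = D k * (∑ j : ZMod N, |wn (j + 1) - wn j|)
                + lam * (C k * (∑ j : ZMod N, |wn j - wn (j - 1)|))
                + ∑ l ∈ Icc 2 (k - 1),
                    (Dkl k l * (∑ j : ZMod N, |W l (j + 1) - W l j|)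
                      + lam * (Ckl k l * (∑ j : ZMod N, |W l j - W l (j - 1)|))) := by
            rw [Finset.sum_add_distrib, Finset.sum_add_distrib, Finset.sum_comm]
            simp only [Finset.sum_add_distrib, ← Finset.mul_sum]
          rw [heq1, hshiftW wn]
          have hb : ∀ l ∈ Icc 2 (k - 1),
              Dkl k l * (∑ j : ZMod N, |W l (j + 1) - W l j|)
                + lam * (Ckl k l * (∑ j : ZMod N, |W l j - W l (j - 1)|))
              ≤ (Dkl k l + lam * Ckl k l) * TV0 := by
            intro l hl
            obtain ⟨hD0, hC0⟩ := hcoef l hl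
            have hTVl : ∑ j : ZMod N, |W l (j + 1) - W l j| ≤ TV0 := (hWl l hl).2
            have hTVl' : ∑ j : ZMod N, |W l j - W l (j - 1)| ≤ TV0 := by
              rw [hshiftW (W l)]; exact hTVl
            have d1 := mul_le_mul_of_nonneg_left hTVl hD0
            have d2 := mul_le_mul_of_nonneg_left
              (mul_le_mul_of_nonneg_left hTVl' hC0) hlam
            have d3 : (Dkl k l + lam * Ckl k l) * TV0
                = Dkl k l * TV0 + lam * (Ckl k l * TV0) := by ring
            linarith
          have hb' : ∑ l ∈ Icc 2 (k - 1),
              (Dkl k l * (∑ j : ZMod N, |W l (j + 1) - W l j|)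
                + lam * (Ckl k l * (∑ j : ZMod N, |W l j - W l (j - 1)|)))
              ≤ (∑ l ∈ Icc 2 (k - 1), (Dkl k l + lam * Ckl k l)) * TV0 := by
            rw [Finset.sum_mul]
            exact Finset.sum_le_sum hb
          have hfin : D k * TV0 + lam * (C k * TV0)
              + (∑ l ∈ Icc 2 (k - 1), (Dkl k l + lam * Ckl k l)) * TV0 = TV0 := by
            linear_combination TV0 * hTk
          have d4 := mul_le_mul_of_nonneg_left
            (mul_le_mul_of_nonneg_left (le_refl TV0) hCk) hlam
          linarith
  obtain ⟨h1, h2⟩ := hmain s hs le_rfl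
  exact ⟨Finset.sup'_le _ _ fun j _ => h1 j, h2⟩
end

section
/- (Theorem B.1: L∞ stability and TVD property for non-CK tableaux, with possibly nonzero first implicit column.) Let s ≥ 1 and let Ã, A ∈ ℝ^{s×s} define two Butcher tableaux with à strictly lower triangular and A lower triangular (a₁₁ and the first column of A possibly nonzero), with c̃_k = ∑_{l<k} ã_{kl} and c_k = ∑_{l≤k} a_{kl}; assume the vectors b̃ and b coincide with the last rows of à and A respectively. Let θ ∈ [0,1]^s, λ ≥ 0 and μ ≥ 0. For k = 1,…,s and l = 1,…,k-1 define 𝒜_k = θ_k a_{kk} + (1-θ_k) c_k, 𝒜̃_k = (1-θ_k) c̃_k, ℬ_{kl} = θ_k a_{kl}/𝒜_l, ℬ̃_{kl} = θ_k ã_{kl}, and recursively 𝒞̃_k = 𝒜̃_k - ∑_{l=2}^{k-1} ℬ_{kl} 𝒞̃_l, 𝒟̃_{kl} = ℬ̃_{kl} - ∑_{r=l+1}^{k-1} ℬ_{kr} 𝒟̃_{rl}, 𝒞_k = 1 - ∑_{l=1}^{k-1} ℬ_{kl} 𝒞_l, 𝒟_{kl} = ℬ_{kl} - ∑_{r=l+1}^{k-1}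 ℬ_{kr} 𝒟_{rl}. Assume that for all k = 1,…,s and l = 1,…,k-1 one has 𝒜_k > 0, 0 ≤ λ 𝒞̃_k ≤ 𝒞_k, and 0 ≤ λ 𝒟̃_{kl} ≤ 𝒟_{kl}. Suppose the periodic grid functions w⁽¹⁾,…,w⁽ˢ⁾ satisfy, for k = 1,…,s and every index j, w⁽ᵏ⁾_j + (1-θ_k) c_k μ Δ_j w⁽ᵏ⁾ = wⁿ_j - λ(1-θ_k) c̃_k Δ_j wⁿ - λ θ_k ∑_{l=1}^{k-1} ã_{kl} Δ_j w⁽ˡ⁾ - μ θ_k ∑_{l=1}^{k} a_{kl} Δ_j w⁽ˡ⁾. Then the update w^{n+1} = w⁽ˢ⁾ satisfies ‖w^{n+1}‖∞ ≤ ‖wⁿ‖∞ and TV(w^{n+1}) ≤ TV(wⁿ). -/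
private lemma tri_swap (n : ℕ) (f : ℕ → ℕ → ℝ) :
    ∑ l ∈ Finset.Icc 1 n, ∑ r ∈ Finset.Icc 1 (l - 1), f l r
      = ∑ r ∈ Finset.Icc 1 n, ∑ l ∈ Finset.Icc (r + 1) n, f l r := by
  induction n with
  | zero => simp
  | succ n ih =>
    rw [Finset.sum_Icc_succ_top (by omega), Finset.sum_Icc_succ_top (by omega)]
    simp only [Nat.add_sub_cancel]
    rw [ih, show Finset.Icc (n + 1 + 1) (n + 1) = ∅ from Finset.Icc_eq_empty (by omega),
      Finset.sum_empty, add_zero,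
      Finset.sum_congr rfl (fun r hr => Finset.sum_Icc_succ_top
        (by have := Finset.mem_Icc.mp hr; omega) (fun l => f l r)),
      Finset.sum_add_distrib]

/-- Theorem B.1: L∞ stability and TVD property of the convex-combination s-stage TVD
IMEX-RK scheme for non-CK tableaux (possibly nonzero first implicit column), where `b̃`
and `b` coincide with the last rows of the tableaux, so the final update coincides with
the last stage `W s`. -/
theorem TVD_IMEX_RK_nonCK_Linf_stable_and_TVD {N : ℕ} [NeZero N] (s : ℕ) (hs : 1 ≤ s)
    (Atil A : ℕ → ℕ → ℝ)
    (hAtil_lower : ∀ k l, k ≤ l → Atil k l = 0)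
    (hA_lower : ∀ k l, k < l → A k l = 0)
    (θ : ℕ → ℝ) (hθ : ∀ k, 1 ≤ k → k ≤ s → 0 ≤ θ k ∧ θ k ≤ 1)
    (lam mu : ℝ) (hlam : 0 ≤ lam) (hmu : 0 ≤ mu)
    (ctil c calA calAt Ctil C : ℕ → ℝ) (calB calBt Dtil Dkl : ℕ → ℕ → ℝ)
    (hctil : ∀ k, ctil k = ∑ l ∈ Finset.Ico 1 k, Atil k l)
    (hc : ∀ k, c k = ∑ l ∈ Finset.Icc 1 k, A k l)
    (hcalA : ∀ k, calA k = θ k * A k k + (1 - θ k) * c k)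
    (hcalAt : ∀ k, calAt k = (1 - θ k) * ctil k)
    (hcalB : ∀ k l, calB k l = θ k * A k l / calA l)
    (hcalBt : ∀ k l, calBt k l = θ k * Atil k l)
    (hCtil : ∀ k, Ctil k = calAt k - ∑ l ∈ Finset.Icc 2 (k - 1), calB k l * Ctil l)
    (hDtil : ∀ k l, Dtil k l =
      calBt k l - ∑ r ∈ Finset.Icc (l + 1) (k - 1), calB k r * Dtil r l)
    (hC : ∀ k, C k = 1 - ∑ l ∈ Finset.Icc 1 (k - 1), calB k l * C l)
    (hDkl : ∀ k l, Dkl k l =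
      calB k l - ∑ r ∈ Finset.Icc (l + 1) (k - 1), calB k r * Dkl r l)
    (hsigns : ∀ k, 1 ≤ k → k ≤ s →
      0 < calA k ∧ (0 ≤ lam * Ctil k ∧ lam * Ctil k ≤ C k) ∧
        ∀ l, 1 ≤ l → l < k → 0 ≤ lam * Dtil k l ∧ lam * Dtil k l ≤ Dkl k l)
    (wn : ZMod N → ℝ) (W : ℕ → ZMod N → ℝ)
    (hstage : ∀ k, 1 ≤ k → k ≤ s → ∀ j : ZMod N,
      W k j + (1 - θ k) * c k * mu * (W k j - W k (j - 1)) =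
        wn j
        - lam * (1 - θ k) * ctil k * (wn j - wn (j - 1))
        - lam * θ k * ∑ l ∈ Finset.Ico 1 k, Atil k l * (W l j - W l (j - 1))
        - mu * θ k * ∑ l ∈ Finset.Icc 1 k, A k l * (W l j - W l (j - 1))) :
    Finset.univ.sup' Finset.univ_nonempty (fun j : ZMod N => |W s j|) ≤
      Finset.univ.sup' Finset.univ_nonempty (fun j : ZMod N => |wn j|) ∧
    (∑ j : ZMod N, |W s (j + 1) - W s j|) ≤ ∑ j : ZMod N, |wn (j + 1) - wn j| := by
  -- shift invariance of sums over `ZMod N`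
  have shift1 : ∀ x : ZMod N → ℝ, ∑ j : ZMod N, x (j - 1) = ∑ j, x j := fun x =>
    Fintype.sum_equiv (Equiv.subRight 1) _ _ (fun _ => rfl)
  have habs : ∀ x : ZMod N → ℝ,
      (∑ j : ZMod N, |x j - x (j - 1)|) = ∑ j : ZMod N, |x (j + 1) - x j| := by
    intro x
    rw [← shift1 (fun j => |x (j + 1) - x j|)]
    refine Finset.sum_congr rfl fun j _ => ?_
    simp [sub_add_cancel]
  have hCtil1 : Ctil 1 = 0 := by
    have h1 : ctil 1 = 0 := by rw [hctil 1]; simp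
    rw [hCtil 1]
    simp [hcalAt 1, h1]
  -- the key representation of each stage
  have key : ∀ k, 1 ≤ k → k ≤ s → ∀ j : ZMod N,
      (1 + mu * calA k) * W k j = mu * calA k * W k (j - 1) +
        ((C k - lam * Ctil k) * wn j + lam * Ctil k * wn (j - 1) +
          ∑ r ∈ Finset.Icc 1 (k - 1),
            ((Dkl k r - lam * Dtil k r) * W r j + lam * Dtil k r * W r (j - 1))) := by
    intro k
    induction k using Nat.strong_induction_on with
    | _ k IH =>
    intro hk1 hks j
    have hIco : Finset.Ico 1 k = Finset.Icc 1 (k - 1) := by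
      ext x; simp only [Finset.mem_Ico, Finset.mem_Icc]; omega
    have hsplit : ∑ l ∈ Finset.Icc 1 k, A k l * (W l j - W l (j - 1))
        = (∑ l ∈ Finset.Icc 1 (k - 1), A k l * (W l j - W l (j - 1)))
          + A k k * (W k j - W k (j - 1)) := by
      rw [show Finset.Icc 1 k = Finset.Icc 1 ((k - 1) + 1) from by
        rw [Nat.sub_add_cancel hk1]]
      rw [Finset.sum_Icc_succ_top (by omega), Nat.sub_add_cancel hk1]
    have h0 := hstage k hk1 hks j
    rw [hIco, hsplit] at h0
    -- substitution of previous stages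
    have hsum3 : ∑ l ∈ Finset.Icc 1 (k - 1), mu * θ k * (A k l * (W l j - W l (j - 1)))
        = ∑ l ∈ Finset.Icc 1 (k - 1), calB k l *
            (((C l - lam * Ctil l) * wn j + lam * Ctil l * wn (j - 1) +
              ∑ r ∈ Finset.Icc 1 (l - 1),
                ((Dkl l r - lam * Dtil l r) * W r j + lam * Dtil l r * W r (j - 1)))
              - W l j) := by
      refine Finset.sum_congr rfl fun l hl => ?_
      obtain ⟨hl1, hl2⟩ := Finset.mem_Icc.mp hl
      have ihl := IH l (by omega) hl1 (by omega) j
      have hBA : calB k l * calA l = θ k * A k l := by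
        have hAne : calA l ≠ 0 := ne_of_gt (hsigns l hl1 (by omega)).1
        rw [hcalB k l]; field_simp
      linear_combination calB k l * ihl - mu * (W l j - W l (j - 1)) * hBA
    -- expansion of the new bracket using the recursions
    have h1 : ∑ l ∈ Finset.Icc 1 (k - 1),
          ((Dkl k l - lam * Dtil k l) * W l j + lam * Dtil k l * W l (j - 1))
        = (∑ l ∈ Finset.Icc 1 (k - 1), calB k l * W l j)
          - lam * θ k * ∑ l ∈ Finset.Icc 1 (k - 1), Atil k l * (W l j - W l (j - 1))
          - ∑ l ∈ Finset.Icc 1 (k - 1), calB k l *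
              ∑ r ∈ Finset.Icc 1 (l - 1),
                ((Dkl l r - lam * Dtil l r) * W r j + lam * Dtil l r * W r (j - 1)) := by
      have hper : ∀ l ∈ Finset.Icc 1 (k - 1),
          (Dkl k l - lam * Dtil k l) * W l j + lam * Dtil k l * W l (j - 1)
            = (calB k l * W l j - lam * (θ k * (Atil k l * (W l j - W l (j - 1)))))
              - ∑ r ∈ Finset.Icc (l + 1) (k - 1),
                  calB k r * ((Dkl r l - lam * Dtil r l) * W l j
                    + lam * Dtil r l * W l (j - 1)) := by
        intro l _
        have hq : ∑ r ∈ Finset.Icc (l + 1) (k - 1),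
              calB k r * ((Dkl r l - lam * Dtil r l) * W l j
                + lam * Dtil r l * W l (j - 1))
            = (∑ r ∈ Finset.Icc (l + 1) (k - 1), calB k r * Dkl r l) * W l j
              + (∑ r ∈ Finset.Icc (l + 1) (k - 1), calB k r * Dtil r l)
                  * (lam * (W l (j - 1) - W l j)) := by
          rw [Finset.sum_mul, Finset.sum_mul, ← Finset.sum_add_distrib]
          exact Finset.sum_congr rfl fun r _ => by ring
        rw [hDkl k l, hDtil k l, hcalBt k l]
        linear_combination hq
      rw [Finset.sum_congr rfl hper, Finset.sum_sub_distrib, Finset.sum_sub_distrib]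
      have e1 : ∑ l ∈ Finset.Icc 1 (k - 1),
            lam * (θ k * (Atil k l * (W l j - W l (j - 1))))
          = lam * θ k * ∑ l ∈ Finset.Icc 1 (k - 1), Atil k l * (W l j - W l (j - 1)) := by
        rw [Finset.mul_sum]
        exact Finset.sum_congr rfl fun l _ => by ring
      have e2 : ∑ l ∈ Finset.Icc 1 (k - 1), ∑ r ∈ Finset.Icc (l + 1) (k - 1),
            calB k r * ((Dkl r l - lam * Dtil r l) * W l j + lam * Dtil r l * W l (j - 1))
          = ∑ l ∈ Finset.Icc 1 (k - 1), calB k l *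
              ∑ r ∈ Finset.Icc 1 (l - 1),
                ((Dkl l r - lam * Dtil l r) * W r j + lam * Dtil l r * W r (j - 1)) := by
        rw [← tri_swap (k - 1) (fun l r => calB k l *
          ((Dkl l r - lam * Dtil l r) * W r j + lam * Dtil l r * W r (j - 1)))]
        exact Finset.sum_congr rfl fun l _ => (Finset.mul_sum _ _ _).symm
      linear_combination -e1 - e2
    -- the l = 1 term vanishes in the `Ctil` recursion
    have hbot : ∑ l ∈ Finset.Icc 2 (k - 1), calB k l * Ctil l
        = ∑ l ∈ Finset.Icc 1 (k - 1), calB k l * Ctil l := by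
      refine Finset.sum_subset (Finset.Icc_subset_Icc_left one_le_two) fun x hx hx' => ?_
      have hx1 : x = 1 := by
        simp only [Finset.mem_Icc] at hx hx'; omega
      rw [hx1, hCtil1, mul_zero]
    -- distribution of the substituted brackets
    have h2 : ∑ l ∈ Finset.Icc 1 (k - 1), calB k l *
          (((C l - lam * Ctil l) * wn j + lam * Ctil l * wn (j - 1) +
            ∑ r ∈ Finset.Icc 1 (l - 1),
              ((Dkl l r - lam * Dtil l r) * W r j + lam * Dtil l r * W r (j - 1)))
            - W l j)
        = (∑ l ∈ Finset.Icc 1 (k - 1), calB k l * C l) * wn j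
          + (∑ l ∈ Finset.Icc 1 (k - 1), calB k l * Ctil l) * (lam * (wn (j - 1) - wn j))
          + ∑ l ∈ Finset.Icc 1 (k - 1), calB k l *
              ∑ r ∈ Finset.Icc 1 (l - 1),
                ((Dkl l r - lam * Dtil l r) * W r j + lam * Dtil l r * W r (j - 1))
          - ∑ l ∈ Finset.Icc 1 (k - 1), calB k l * W l j := by
      rw [Finset.sum_mul, Finset.sum_mul, ← Finset.sum_add_distrib,
        ← Finset.sum_add_distrib, ← Finset.sum_sub_distrib]
      exact Finset.sum_congr rfl fun l _ => by ring
    -- the main identity for the new bracket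
    have hstar : (C k - lam * Ctil k) * wn j + lam * Ctil k * wn (j - 1) +
          ∑ r ∈ Finset.Icc 1 (k - 1),
            ((Dkl k r - lam * Dtil k r) * W r j + lam * Dtil k r * W r (j - 1))
        = wn j - lam * (1 - θ k) * ctil k * (wn j - wn (j - 1))
          - lam * θ k * ∑ l ∈ Finset.Icc 1 (k - 1), Atil k l * (W l j - W l (j - 1))
          - ∑ l ∈ Finset.Icc 1 (k - 1), calB k l *
              (((C l - lam * Ctil l) * wn j + lam * Ctil l * wn (j - 1) +
                ∑ r ∈ Finset.Icc 1 (l - 1),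
                  ((Dkl l r - lam * Dtil l r) * W r j + lam * Dtil l r * W r (j - 1)))
                - W l j) := by
      rw [hC k, hCtil k, hcalAt k, hbot, h2]
      linear_combination h1
    have hms : ∑ l ∈ Finset.Icc 1 (k - 1), mu * θ k * (A k l * (W l j - W l (j - 1)))
        = mu * θ k * ∑ l ∈ Finset.Icc 1 (k - 1), A k l * (W l j - W l (j - 1)) :=
      (Finset.mul_sum _ _ _).symm
    rw [hcalA k]
    linear_combination h0 - hstar - hsum3 + hms
  -- the coefficients sum to one
  have coefsum : ∀ k, C k + ∑ l ∈ Finset.Icc 1 (k - 1), Dkl k l = 1 := by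
    intro k
    induction k using Nat.strong_induction_on with
    | _ k IH =>
    have h1 : ∑ l ∈ Finset.Icc 1 (k - 1), Dkl k l
        = ∑ l ∈ Finset.Icc 1 (k - 1), calB k l
          - ∑ l ∈ Finset.Icc 1 (k - 1), ∑ r ∈ Finset.Icc (l + 1) (k - 1),
              calB k r * Dkl r l := by
      rw [← Finset.sum_sub_distrib]
      exact Finset.sum_congr rfl fun l _ => hDkl k l
    have h2 : ∑ l ∈ Finset.Icc 1 (k - 1), ∑ r ∈ Finset.Icc (l + 1) (k - 1),
          calB k r * Dkl r l
        = ∑ l ∈ Finset.Icc 1 (k - 1), ∑ r ∈ Finset.Icc 1 (l - 1), calB k l * Dkl l r :=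
      (tri_swap (k - 1) (fun l r => calB k l * Dkl l r)).symm
    have h3 : ∀ l ∈ Finset.Icc 1 (k - 1),
        ∑ r ∈ Finset.Icc 1 (l - 1), calB k l * Dkl l r = calB k l * (1 - C l) := by
      intro l hl
      obtain ⟨hl1, hl2⟩ := Finset.mem_Icc.mp hl
      have := IH l (by omega)
      rw [← Finset.mul_sum]
      linear_combination calB k l * this
    rw [hC k, h1, h2, Finset.sum_congr rfl h3]
    have h4 : ∀ l ∈ Finset.Icc 1 (k - 1),
        calB k l = calB k l * C l + calB k l * (1 - C l) := fun l _ => by ring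
    rw [Finset.sum_congr rfl h4, Finset.sum_add_distrib]
    ring
  -- stability and TVD, by strong induction on the stage
  have stab : ∀ k, 1 ≤ k → k ≤ s →
      (∀ j, |W k j| ≤ Finset.univ.sup' Finset.univ_nonempty (fun j : ZMod N => |wn j|)) ∧
      (∑ j : ZMod N, |W k (j + 1) - W k j|) ≤ ∑ j : ZMod N, |wn (j + 1) - wn j| := by
    intro k
    induction k using Nat.strong_induction_on with
    | _ k IH =>
    intro hk1 hks
    set M := Finset.univ.sup' Finset.univ_nonempty (fun j : ZMod N => |wn j|) with hM
    have hMb : ∀ j, |wn j| ≤ M := fun j => by rw [hM]; exact Finset.le_sup' (fun j : ZMod N => |wn j|) (Finset.mem_univ j)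
    obtain ⟨hApos, ⟨hCt0, hCt1⟩, hD⟩ := hsigns k hk1 hks
    have ha : 0 ≤ mu * calA k := mul_nonneg hmu hApos.le
    have hWl : ∀ l ∈ Finset.Icc 1 (k - 1), (∀ j, |W l j| ≤ M) ∧
        (∑ j : ZMod N, |W l (j + 1) - W l j|) ≤ ∑ j : ZMod N, |wn (j + 1) - wn j| := by
      intro l hl
      obtain ⟨hl1, hl2⟩ := Finset.mem_Icc.mp hl
      exact IH l (by omega) hl1 (by omega)
    -- bound on the bracket
    have hRbound : ∀ j : ZMod N,
        |(C k - lam * Ctil k) * wn j + lam * Ctil k * wn (j - 1) +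
          ∑ r ∈ Finset.Icc 1 (k - 1),
            ((Dkl k r - lam * Dtil k r) * W r j + lam * Dtil k r * W r (j - 1))| ≤ M := by
      intro j
      have t1 : |(C k - lam * Ctil k) * wn j| ≤ (C k - lam * Ctil k) * M := by
        rw [abs_mul, abs_of_nonneg (by linarith)]
        exact mul_le_mul_of_nonneg_left (hMb j) (by linarith)
      have t2 : |lam * Ctil k * wn (j - 1)| ≤ lam * Ctil k * M := by
        rw [abs_mul, abs_of_nonneg (by linarith)]
        exact mul_le_mul_of_nonneg_left (hMb (j - 1)) (by linarith)
      have t3 : |∑ r ∈ Finset.Icc 1 (k - 1),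
            ((Dkl k r - lam * Dtil k r) * W r j + lam * Dtil k r * W r (j - 1))|
          ≤ ∑ r ∈ Finset.Icc 1 (k - 1), Dkl k r * M := by
        refine (Finset.abs_sum_le_sum_abs _ _).trans (Finset.sum_le_sum fun r hr => ?_)
        obtain ⟨hr1, hr2⟩ := Finset.mem_Icc.mp hr
        obtain ⟨hd0, hd1⟩ := hD r hr1 (by omega)
        have hWr := (hWl r hr).1
        calc |(Dkl k r - lam * Dtil k r) * W r j + lam * Dtil k r * W r (j - 1)|
            ≤ |(Dkl k r - lam * Dtil k r) * W r j| + |lam * Dtil k r * W r (j - 1)| :=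
              abs_add_le _ _
          _ ≤ (Dkl k r - lam * Dtil k r) * M + lam * Dtil k r * M := by
              rw [abs_mul, abs_mul, abs_of_nonneg (by linarith), abs_of_nonneg hd0]
              exact add_le_add (mul_le_mul_of_nonneg_left (hWr j) (by linarith))
                (mul_le_mul_of_nonneg_left (hWr (j - 1)) hd0)
          _ = Dkl k r * M := by ring
      have hsumM : (C k - lam * Ctil k) * M + lam * Ctil k * M +
          ∑ r ∈ Finset.Icc 1 (k - 1), Dkl k r * M = M := by
        rw [← Finset.sum_mul]
        linear_combination M * coefsum k
      calc |(C k - lam * Ctil k) * wn j + lam * Ctil k * wn (j - 1) + ∑ r ∈ Finset.Icc 1 (k - 1),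
            ((Dkl k r - lam * Dtil k r) * W r j + lam * Dtil k r * W r (j - 1))|
          ≤ |(C k - lam * Ctil k) * wn j| + |lam * Ctil k * wn (j - 1)| +
            |∑ r ∈ Finset.Icc 1 (k - 1),
              ((Dkl k r - lam * Dtil k r) * W r j + lam * Dtil k r * W r (j - 1))| :=
            abs_add_three _ _ _
        _ ≤ (C k - lam * Ctil k) * M + lam * Ctil k * M +
            ∑ r ∈ Finset.Icc 1 (k - 1), Dkl k r * M := by
            exact add_le_add (add_le_add t1 t2) t3
        _ = M := hsumM
    -- L∞ bound
    have hLinf : ∀ j, |W k j| ≤ M := by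
      obtain ⟨j0, -, hj0⟩ := Finset.exists_mem_eq_sup' Finset.univ_nonempty
        (fun j : ZMod N => |W k j|)
      have hloc : ∀ j, |W k j| ≤ |W k j0| := fun j => hj0 ▸ Finset.le_sup' (fun j : ZMod N => |W k j|) (Finset.mem_univ j)
      have hk0 := key k hk1 hks j0
      have e1 : (1 + mu * calA k) * |W k j0| ≤ mu * calA k * |W k j0| + M := by
        calc (1 + mu * calA k) * |W k j0| = |(1 + mu * calA k) * W k j0| := by
              rw [abs_mul, abs_of_nonneg (show (0:ℝ) ≤ 1 + mu * calA k by linarith)]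
          _ = |mu * calA k * W k (j0 - 1) +
              ((C k - lam * Ctil k) * wn j0 + lam * Ctil k * wn (j0 - 1) +
                ∑ r ∈ Finset.Icc 1 (k - 1),
                  ((Dkl k r - lam * Dtil k r) * W r j0 + lam * Dtil k r * W r (j0 - 1)))| := by
              rw [hk0]
          _ ≤ |mu * calA k * W k (j0 - 1)| + _ := abs_add_le _ _
          _ ≤ mu * calA k * |W k j0| + M := by
              rw [abs_mul, abs_of_nonneg ha]
              exact add_le_add (mul_le_mul_of_nonneg_left (hloc (j0 - 1)) ha) (hRbound j0)
      have : |W k j0| ≤ M := by nlinarith [abs_nonneg (W k j0)]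
      exact fun j => (hloc j).trans this
    -- TVD bound
    have hdiff : ∀ j : ZMod N, (1 + mu * calA k) * (W k (j + 1) - W k j)
        = mu * calA k * (W k j - W k (j - 1)) +
          ((C k - lam * Ctil k) * (wn (j + 1) - wn j) + lam * Ctil k * (wn j - wn (j - 1)) +
            ∑ l ∈ Finset.Icc 1 (k - 1),
              ((Dkl k l - lam * Dtil k l) * (W l (j + 1) - W l j)
                + lam * Dtil k l * (W l j - W l (j - 1)))) := by
      intro j
      have k1 := key k hk1 hks (j + 1)
      simp only [add_sub_cancel_right] at k1
      have k0 := key k hk1 hks j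
      have hmsd : ∑ l ∈ Finset.Icc 1 (k - 1),
            ((Dkl k l - lam * Dtil k l) * (W l (j + 1) - W l j)
              + lam * Dtil k l * (W l j - W l (j - 1)))
          = (∑ r ∈ Finset.Icc 1 (k - 1),
              ((Dkl k r - lam * Dtil k r) * W r (j + 1) + lam * Dtil k r * W r j))
            - ∑ r ∈ Finset.Icc 1 (k - 1),
              ((Dkl k r - lam * Dtil k r) * W r j + lam * Dtil k r * W r (j - 1)) := by
        rw [← Finset.sum_sub_distrib]
        exact Finset.sum_congr rfl fun l _ => by ring
      linear_combination k1 - k0 - hmsd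
    have hV : (∑ j : ZMod N, |W k (j + 1) - W k j|)
        ≤ ∑ j : ZMod N, |(C k - lam * Ctil k) * (wn (j + 1) - wn j)
            + lam * Ctil k * (wn j - wn (j - 1)) +
            ∑ l ∈ Finset.Icc 1 (k - 1),
              ((Dkl k l - lam * Dtil k l) * (W l (j + 1) - W l j)
                + lam * Dtil k l * (W l j - W l (j - 1)))| := by
      have step1 : ∀ j : ZMod N, (1 + mu * calA k) * |W k (j + 1) - W k j|
          ≤ mu * calA k * |W k j - W k (j - 1)| +
            |(C k - lam * Ctil k) * (wn (j + 1) - wn j)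
              + lam * Ctil k * (wn j - wn (j - 1)) +
              ∑ l ∈ Finset.Icc 1 (k - 1),
                ((Dkl k l - lam * Dtil k l) * (W l (j + 1) - W l j)
                  + lam * Dtil k l * (W l j - W l (j - 1)))| := by
        intro j
        calc (1 + mu * calA k) * |W k (j + 1) - W k j|
            = |(1 + mu * calA k) * (W k (j + 1) - W k j)| := by
              rw [abs_mul, abs_of_nonneg (show (0:ℝ) ≤ 1 + mu * calA k by linarith)]
          _ = |mu * calA k * (W k j - W k (j - 1)) + _| := by rw [hdiff j]
          _ ≤ |mu * calA k * (W k j - W k (j - 1))| + _ := abs_add_le _ _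
          _ ≤ _ := by rw [abs_mul, abs_of_nonneg ha]
      have hsum := Finset.sum_le_sum (fun j (_ : j ∈ Finset.univ) => step1 j)
      rw [← Finset.mul_sum, Finset.sum_add_distrib, ← Finset.mul_sum, habs (W k)] at hsum
      linarith
    have hDb : (∑ j : ZMod N, |(C k - lam * Ctil k) * (wn (j + 1) - wn j)
          + lam * Ctil k * (wn j - wn (j - 1)) +
          ∑ l ∈ Finset.Icc 1 (k - 1),
            ((Dkl k l - lam * Dtil k l) * (W l (j + 1) - W l j)
              + lam * Dtil k l * (W l j - W l (j - 1)))|)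
        ≤ ∑ j : ZMod N, |wn (j + 1) - wn j| := by
      have per : ∀ j : ZMod N, |(C k - lam * Ctil k) * (wn (j + 1) - wn j)
            + lam * Ctil k * (wn j - wn (j - 1)) +
            ∑ l ∈ Finset.Icc 1 (k - 1),
              ((Dkl k l - lam * Dtil k l) * (W l (j + 1) - W l j)
                + lam * Dtil k l * (W l j - W l (j - 1)))|
          ≤ (C k - lam * Ctil k) * |wn (j + 1) - wn j|
            + lam * Ctil k * |wn j - wn (j - 1)| +
            ∑ l ∈ Finset.Icc 1 (k - 1),
              ((Dkl k l - lam * Dtil k l) * |W l (j + 1) - W l j|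
                + lam * Dtil k l * |W l j - W l (j - 1)|) := by
        intro j
        refine (abs_add_three _ _ _).trans ?_
        refine add_le_add (add_le_add ?_ ?_) ?_
        · rw [abs_mul, abs_of_nonneg (by linarith)]
        · rw [abs_mul, abs_of_nonneg (by linarith)]
        · refine (Finset.abs_sum_le_sum_abs _ _).trans (Finset.sum_le_sum fun l hl => ?_)
          obtain ⟨hl1, hl2⟩ := Finset.mem_Icc.mp hl
          obtain ⟨hd0, hd1⟩ := hD l hl1 (by omega)
          calc |(Dkl k l - lam * Dtil k l) * (W l (j + 1) - W l j)
                + lam * Dtil k l * (W l j - W l (j - 1))|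
              ≤ |(Dkl k l - lam * Dtil k l) * (W l (j + 1) - W l j)|
                + |lam * Dtil k l * (W l j - W l (j - 1))| := abs_add_le _ _
            _ = (Dkl k l - lam * Dtil k l) * |W l (j + 1) - W l j|
                + lam * Dtil k l * |W l j - W l (j - 1)| := by
                rw [abs_mul, abs_mul, abs_of_nonneg (by linarith), abs_of_nonneg hd0]
      refine (Finset.sum_le_sum fun j (_ : j ∈ Finset.univ) => per j).trans ?_
      rw [Finset.sum_add_distrib, Finset.sum_add_distrib, ← Finset.mul_sum, ← Finset.mul_sum,
        habs wn, Finset.sum_comm]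
      have perl : ∀ l ∈ Finset.Icc 1 (k - 1),
          (∑ j : ZMod N, ((Dkl k l - lam * Dtil k l) * |W l (j + 1) - W l j|
            + lam * Dtil k l * |W l j - W l (j - 1)|))
          ≤ Dkl k l * ∑ j : ZMod N, |wn (j + 1) - wn j| := by
        intro l hl
        obtain ⟨hl1, hl2⟩ := Finset.mem_Icc.mp hl
        obtain ⟨hd0, hd1⟩ := hD l hl1 (by omega)
        have hTVl := (hWl l hl).2
        have : ∑ j : ZMod N, ((Dkl k l - lam * Dtil k l) * |W l (j + 1) - W l j|
              + lam * Dtil k l * |W l j - W l (j - 1)|)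
            = Dkl k l * ∑ j : ZMod N, |W l (j + 1) - W l j| := by
          rw [Finset.sum_add_distrib, ← Finset.mul_sum, ← Finset.mul_sum, habs (W l)]
          ring
        rw [this]
        exact mul_le_mul_of_nonneg_left hTVl (by linarith)
      have hfin : (C k - lam * Ctil k) * (∑ j : ZMod N, |wn (j + 1) - wn j|)
            + lam * Ctil k * (∑ j : ZMod N, |wn (j + 1) - wn j|)
            + ∑ l ∈ Finset.Icc 1 (k - 1), Dkl k l * ∑ j : ZMod N, |wn (j + 1) - wn j|
          = ∑ j : ZMod N, |wn (j + 1) - wn j| := by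
        rw [← Finset.sum_mul]
        linear_combination (∑ j : ZMod N, |wn (j + 1) - wn j|) * coefsum k
      have := Finset.sum_le_sum perl
      linarith
    exact ⟨hLinf, hV.trans hDb⟩
  obtain ⟨h1, h2⟩ := stab s hs le_rfl
  exact ⟨Finset.sup'_le _ _ fun j _ => h1 j, h2⟩
end
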